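/- arXiv:1609.05983 — 13 statements merged into one kernel-verified Lean document; each statement's English description precedes it below -/
import Mathlib

section
/- For every x ≥ 0 and p ∈ (0,1], the Hamiltonian satisfies H(x,0,p) = 0; more precisely H(x,ξ,p) = ((λ+r)/p − λ + σ² − μ)·x·ξ whenever 0 ≤ ξ ≤ p·L'(0); and for all ξ ≥ 0 one has the two-sided bound (((λ+r)x − 1)/p + (σ² − λ − μ)x)·ξ ≤ H(x,ξ,p) ≤ ((λ+r)/p − λ + σ² − μ)·x·ξ. -/
/-! The infimum in `H` is that of `ω ↦ L ω - c ω` over `[0,1)` with `c = ξ / p ≥ 0`. Since `L` is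
increasing with `L 0 = 0`, this function is bounded below by `-c` and takes the value `0` at
`ω = 0`, which gives the two-sided bound. If moreover `c ≤ L'(0)`, convexity of `L` gives
`L' ≥ c` on `[0,1)`, so the function is increasing and its infimum is its value `0` at `ω = 0`. -/

open Set Filter

/-- The Hamiltonian `H(x,ξ,p) = inf_{ω ∈ [0,1)} { L(ω) − (ξ/p)·ω } + ((λ+r)/p − λ + σ² − μ)·x·ξ`. -/
noncomputable def Ham (L : ℝ → ℝ) (lam r mu sig x ξ p : ℝ) : ℝ :=
  sInf ((fun ω => L ω - ξ / p * ω) '' Set.Ico 0 1) +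
    ((lam + r) / p - lam + sig ^ 2 - mu) * x * ξ

section Deriv

variable {D : Set ℝ} {f : ℝ → ℝ}

theorem Convex.strictMonoOn_of_forall_deriv_pos (hD : Convex ℝ D)
    (hf : ∀ u ∈ D, 0 < deriv f u) : StrictMonoOn f D :=
  strictMonoOn_of_deriv_pos hD
    (fun u hu => (differentiableAt_of_deriv_ne_zero (hf u hu).ne').continuousAt.continuousWithinAt)
    fun u hu => hf u (interior_subset hu)

theorem Convex.mul_sub_le_image_sub_of_forall_le_deriv (hD : Convex ℝ D)
    (hf : ∀ u ∈ D, DifferentiableAt ℝ f u) {C : ℝ} (hC : ∀ u ∈ D, C ≤ deriv f u) :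
    ∀ x ∈ D, ∀ y ∈ D, x ≤ y → C * (y - x) ≤ f y - f x :=
  hD.mul_sub_le_image_sub_of_le_deriv
    (fun u hu => (hf u hu).continuousAt.continuousWithinAt)
    (fun u hu => (hf u (interior_subset hu)).differentiableWithinAt)
    fun u hu => hC u (interior_subset hu)

end Deriv

section Infimum

variable {L : ℝ → ℝ} {c : ℝ}

theorem csInf_image_sub_mul_Ico_mem_Icc (hL0 : L 0 = 0) (hL : MonotoneOn L (Ico 0 1))
    (hc : 0 ≤ c) : sInf ((fun ω => L ω - c * ω) '' Ico 0 1) ∈ Icc (-c) 0 := by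
  have h0 : (0 : ℝ) ∈ Ico (0 : ℝ) 1 := ⟨le_rfl, one_pos⟩
  have hzero_mem : (0 : ℝ) ∈ (fun ω => L ω - c * ω) '' Ico 0 1 := ⟨0, h0, by simp [hL0]⟩
  have hlower : -c ∈ lowerBounds ((fun ω => L ω - c * ω) '' Ico 0 1) := by
    rintro _ ⟨ω, hω, rfl⟩
    have hLω : 0 ≤ L ω := hL0 ▸ hL h0 hω hω.1
    nlinarith [hω.2]
  exact ⟨le_csInf ⟨0, hzero_mem⟩ hlower, csInf_le ⟨-c, hlower⟩ hzero_mem⟩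

theorem isLeast_image_sub_mul_Ico (hL0 : L 0 = 0)
    (hL : ∀ u ∈ Ico (0 : ℝ) 1, DifferentiableAt ℝ L u)
    (hc : ∀ u ∈ Ico (0 : ℝ) 1, c ≤ deriv L u) :
    IsLeast ((fun ω => L ω - c * ω) '' Ico 0 1) 0 := by
  have h0 : (0 : ℝ) ∈ Ico (0 : ℝ) 1 := ⟨le_rfl, one_pos⟩
  refine ⟨⟨0, h0, by simp [hL0]⟩, ?_⟩
  rintro _ ⟨ω, hω, rfl⟩
  have hcω := (convex_Ico 0 1).mul_sub_le_image_sub_of_forall_le_deriv hL hc 0 h0 ω hω hω.1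
  rw [hL0, sub_zero, sub_zero] at hcω
  exact sub_nonneg.2 hcω

end Infimum

theorem stmt_0_general
    (r mu lam sig : ℝ)
    (L : ℝ → ℝ)
    (hL0 : L 0 = 0)
    (hL1 : ∀ u ∈ Set.Ico (0:ℝ) 1, 0 < deriv L u)
    (hL2 : ∀ u ∈ Set.Ico (0:ℝ) 1, 0 < deriv (deriv L) u)
    (x : ℝ) (p : ℝ) (hp : p ∈ Set.Ioc (0:ℝ) 1) :
    Ham L lam r mu sig x 0 p = 0 ∧
    (∀ ξ : ℝ, 0 ≤ ξ → ξ ≤ p * deriv L 0 →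
      Ham L lam r mu sig x ξ p = ((lam + r) / p - lam + sig ^ 2 - mu) * x * ξ) ∧
    (∀ ξ : ℝ, 0 ≤ ξ →
      (((lam + r) * x - 1) / p + (sig ^ 2 - lam - mu) * x) * ξ ≤ Ham L lam r mu sig x ξ p ∧
      Ham L lam r mu sig x ξ p ≤ ((lam + r) / p - lam + sig ^ 2 - mu) * x * ξ) := by
  obtain ⟨hp0, -⟩ := hp
  have h0 : (0 : ℝ) ∈ Ico (0 : ℝ) 1 := ⟨le_rfl, one_pos⟩
  have hL_diff u (hu : u ∈ Ico (0 : ℝ) 1) : DifferentiableAt ℝ L u :=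
    differentiableAt_of_deriv_ne_zero (hL1 u hu).ne'
  have hL_mono := ((convex_Ico 0 1).strictMonoOn_of_forall_deriv_pos hL1).monotoneOn
  have hL'_mono := ((convex_Ico 0 1).strictMonoOn_of_forall_deriv_pos hL2).monotoneOn
  have hinf_eq ξ (hξp : ξ ≤ p * deriv L 0) :
      sInf ((fun ω => L ω - ξ / p * ω) '' Ico 0 1) = 0 :=
    (isLeast_image_sub_mul_Ico hL0 hL_diff fun u hu =>
      ((div_le_iff₀' hp0).2 hξp).trans (hL'_mono h0 hu hu.1)).csInf_eq
  refine ⟨?_, fun ξ _ hξp => by simp [Ham, hinf_eq ξ hξp], fun ξ hξ => ?_⟩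
  · simpa [Ham] using hinf_eq 0 (mul_nonneg hp0.le (hL1 0 h0).le)
  obtain ⟨hlower, hupper⟩ := csInf_image_sub_mul_Ico_mem_Icc hL0 hL_mono (div_nonneg hξ hp0.le)
  have hsplit : (((lam + r) * x - 1) / p + (sig ^ 2 - lam - mu) * x) * ξ =
      -(ξ / p) + ((lam + r) / p - lam + sig ^ 2 - mu) * x * ξ := by
    field_simp
    ring
  rw [Ham, hsplit]
  constructor <;> linarith

theorem stmt_0
    (r mu lam sig : ℝ) (hmu : 0 ≤ mu) (hr : mu < r) (hlam : 0 ≤ lam) (hsig : 0 ≤ sig)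
    (L : ℝ → ℝ)
    (hL : ContDiffOn ℝ 2 L (Set.Ico 0 1))
    (hL0 : L 0 = 0)
    (hL1 : ∀ u ∈ Set.Ico (0:ℝ) 1, 0 < deriv L u)
    (hL2 : ∀ u ∈ Set.Ico (0:ℝ) 1, 0 < deriv (deriv L) u)
    (hLtop : Filter.Tendsto L (nhdsWithin 1 (Set.Iio 1)) Filter.atTop)
    (x : ℝ) (hx : 0 ≤ x) (p : ℝ) (hp : p ∈ Set.Ioc (0:ℝ) 1) :
    Ham L lam r mu sig x 0 p = 0 ∧
    (∀ ξ : ℝ, 0 ≤ ξ → ξ ≤ p * deriv L 0 →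
      Ham L lam r mu sig x ξ p = ((lam + r) / p - lam + sig ^ 2 - mu) * x * ξ) ∧
    (∀ ξ : ℝ, 0 ≤ ξ →
      (((lam + r) * x - 1) / p + (sig ^ 2 - lam - mu) * x) * ξ ≤ Ham L lam r mu sig x ξ p ∧
      Ham L lam r mu sig x ξ p ≤ ((lam + r) / p - lam + sig ^ 2 - mu) * x * ξ) :=
  stmt_0_general r mu lam sig L hL0 hL1 hL2 x p hp
end

section
/- For every fixed x > 0 and p ∈ (0,1], the map ξ ↦ H(x,ξ,p) is concave on [0,∞) and continuously differentiable there; its derivative H_ξ(x,·,p) is nonincreasing, satisfies H_ξ(x,0,p) = ((λ+r)/p − λ + σ² − μ)·x, and obeys the bounds ((λ+r)x − 1)/p + (σ² − λ − μ)x ≤ H_ξ(x,ξ,p) ≤ ((λ+r)/p − λ + σ² − μ)·x for all ξ ≥ 0. -/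
open Set Filter

private lemma hasDerivAt_F (L : ℝ → ℝ) (a u : ℝ) (hd : DifferentiableAt ℝ L u) :
    HasDerivAt (fun w => L w - a * w) (deriv L u - a) u := by
  have h1 : HasDerivAt (fun w : ℝ => a * w) a u := by
    simpa using (hasDerivAt_id u).const_mul a
  exact hd.hasDerivAt.sub h1

private lemma min_piece (L : ℝ → ℝ)
    (hd : ∀ u ∈ Ico (0:ℝ) 1, DifferentiableAt ℝ L u)
    (a u₀ : ℝ) (hu₀ : u₀ ∈ Ico (0:ℝ) 1)
    (hlt : ∀ u ∈ Ico (0:ℝ) 1, u < u₀ → deriv L u < a)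
    (hgt : ∀ u ∈ Ico (0:ℝ) 1, u₀ < u → a < deriv L u) :
    ∀ ω ∈ Ico (0:ℝ) 1, L u₀ - a * u₀ ≤ L ω - a * ω := by
  intro ω hω
  rcases lt_trichotomy ω u₀ with h | h | h
  · have hsub : Icc ω u₀ ⊆ Ico (0:ℝ) 1 :=
      fun u hu => ⟨le_trans hω.1 hu.1, lt_of_le_of_lt hu.2 hu₀.2⟩
    have anti : StrictAntiOn (fun w => L w - a * w) (Icc ω u₀) := by
      apply strictAntiOn_of_deriv_neg (convex_Icc _ _)
      · exact fun u hu => ((hasDerivAt_F L a u (hd u (hsub hu))).continuousAt).continuousWithinAt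
      · intro u hu
        rw [interior_Icc] at hu
        have hu' : u ∈ Ico (0:ℝ) 1 := hsub ⟨hu.1.le, hu.2.le⟩
        rw [(hasDerivAt_F L a u (hd u hu')).deriv]
        have := hlt u hu' hu.2
        linarith
    exact (anti ⟨le_refl ω, h.le⟩ ⟨h.le, le_refl u₀⟩ h).le
  · rw [h]
  · have hsub : Icc u₀ ω ⊆ Ico (0:ℝ) 1 :=
      fun u hu => ⟨le_trans hu₀.1 hu.1, lt_of_le_of_lt hu.2 hω.2⟩
    have mono : StrictMonoOn (fun w => L w - a * w) (Icc u₀ ω) := by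
      apply strictMonoOn_of_deriv_pos (convex_Icc _ _)
      · exact fun u hu => ((hasDerivAt_F L a u (hd u (hsub hu))).continuousAt).continuousWithinAt
      · intro u hu
        rw [interior_Icc] at hu
        have hu' : u ∈ Ico (0:ℝ) 1 := hsub ⟨hu.1.le, hu.2.le⟩
        rw [(hasDerivAt_F L a u (hd u hu')).deriv]
        have := hgt u hu' hu.1
        linarith
    exact (mono ⟨le_refl u₀, h.le⟩ ⟨h.le, le_refl ω⟩ h).le

private lemma exists_min (L : ℝ → ℝ)
    (hd : ∀ u ∈ Ico (0:ℝ) 1, DifferentiableAt ℝ L u)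
    (hmono : StrictMonoOn (deriv L) (Ico (0:ℝ) 1))
    (hcont : ContinuousOn (deriv L) (Ico (0:ℝ) 1))
    (hsurj : ∀ a : ℝ, ∃ v ∈ Ioo (0:ℝ) 1, a ≤ deriv L v) :
    ∃ m : ℝ → ℝ, (∀ a, m a ∈ Ico (0:ℝ) 1) ∧ Monotone m ∧ Continuous m ∧
      (∀ a, a ≤ deriv L 0 → m a = 0) ∧
      (∀ a, ∀ ω ∈ Ico (0:ℝ) 1, L (m a) - a * m a ≤ L ω - a * ω) := by
  have h01 : (0:ℝ) ∈ Ico (0:ℝ) 1 := ⟨le_refl 0, one_pos⟩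
  have hex : ∀ a : ℝ, deriv L 0 < a → ∃ u, u ∈ Ioo (0:ℝ) 1 ∧ deriv L u = a := by
    intro a ha
    obtain ⟨v, hv, hav⟩ := hsurj a
    have hIcc : Icc (0:ℝ) v ⊆ Ico 0 1 := fun u hu => ⟨hu.1, lt_of_le_of_lt hu.2 hv.2⟩
    obtain ⟨u, hu, hua⟩ := intermediate_value_Icc hv.1.le (hcont.mono hIcc) ⟨ha.le, hav⟩
    have hu1 : u < 1 := lt_of_le_of_lt hu.2 hv.2
    have hu0 : 0 < u := by
      rcases eq_or_lt_of_le hu.1 with h | h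
      · exfalso; rw [← h] at hua; rw [hua] at ha; exact lt_irrefl a ha
      · exact h
    exact ⟨u, ⟨hu0, hu1⟩, hua⟩
  classical
  set m : ℝ → ℝ := fun a => if h : deriv L 0 < a then (hex a h).choose else 0 with hm
  have hm0 : ∀ a, a ≤ deriv L 0 → m a = 0 := by
    intro a ha; simp only [hm, dif_neg (not_lt.2 ha)]
  have hspec : ∀ a, deriv L 0 < a → m a ∈ Ioo (0:ℝ) 1 ∧ deriv L (m a) = a := by
    intro a ha; simp only [hm, dif_pos ha]; exact (hex a ha).choose_spec
  have hmem : ∀ a, m a ∈ Ico (0:ℝ) 1 := by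
    intro a
    by_cases h : deriv L 0 < a
    · exact ⟨(hspec a h).1.1.le, (hspec a h).1.2⟩
    · rw [hm0 a (not_lt.1 h)]; exact h01
  -- bracketing lemmas
  have hA : ∀ a u, u ∈ Ico (0:ℝ) 1 → a ≤ deriv L u → m a ≤ u := by
    intro a u hu hau
    by_cases h : deriv L 0 < a
    · by_contra hlt
      push_neg at hlt
      have := hmono hu (hmem a) hlt
      rw [(hspec a h).2] at this
      linarith
    · rw [hm0 a (not_lt.1 h)]; exact hu.1
  have hB : ∀ a u, u ∈ Ico (0:ℝ) 1 → deriv L u ≤ a → u ≤ m a := by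
    intro a u hu hau
    by_cases h : deriv L 0 < a
    · by_contra hlt
      push_neg at hlt
      have := hmono (hmem a) hu hlt
      rw [(hspec a h).2] at this
      linarith
    · rw [hm0 a (not_lt.1 h)]
      by_contra hlt
      push_neg at hlt
      have := hmono h01 hu hlt
      have h2 := not_lt.1 h
      linarith
  have hmono' : Monotone m := by
    intro a a' haa'
    by_cases h : deriv L 0 < a
    · exact hB a' (m a) (hmem a) (le_trans (le_of_eq (hspec a h).2) haa')
    · rw [hm0 a (not_lt.1 h)]; exact (hmem a').1
  -- continuity
  have key : ∀ a : ℝ, ∀ ε > (0:ℝ), ∃ δ > (0:ℝ), ∀ a', |a' - a| < δ → |m a' - m a| ≤ ε := by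
    intro a ε hε
    obtain ⟨u₀, hu₀def⟩ : ∃ u₀ : ℝ, u₀ = m a := ⟨_, rfl⟩
    have hu₀ : u₀ ∈ Ico (0:ℝ) 1 := hu₀def ▸ hmem a
    obtain ⟨uP, huPdef⟩ : ∃ uP : ℝ, uP = u₀ + min (ε/2) ((1 - u₀)/2) := ⟨_, rfl⟩
    have hmin1 : min (ε/2) ((1 - u₀)/2) ≤ ε/2 := min_le_left _ _
    have hmin2 : min (ε/2) ((1 - u₀)/2) ≤ (1 - u₀)/2 := min_le_right _ _
    have hmin_pos : 0 < min (ε/2) ((1 - u₀)/2) := lt_min (by linarith) (by have := hu₀.2; linarith)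
    have huPgt : u₀ < uP := by rw [huPdef]; linarith
    have huPmem : uP ∈ Ico (0:ℝ) 1 := ⟨by rw [huPdef]; linarith [hu₀.1], by rw [huPdef]; have := hu₀.2; linarith⟩
    have huPle : uP ≤ u₀ + ε/2 := by rw [huPdef]; linarith
    have haU : a < deriv L uP := by
      by_cases h : deriv L 0 < a
      · have h2 := hmono (hmem a) huPmem (hu₀def ▸ huPgt)
        rw [(hspec a h).2] at h2; exact h2
      · have hu₀0 : m a = 0 := hm0 a (not_lt.1 h)
        have h2 := hmono h01 huPmem (by rw [← hu₀0, ← hu₀def]; exact huPgt)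
        have h3 := not_lt.1 h
        linarith
    by_cases hcase : u₀ ≤ ε
    · refine ⟨deriv L uP - a, by linarith, fun a' ha' => ?_⟩
      rw [abs_lt] at ha'
      have hup : m a' ≤ uP := hA a' uP huPmem (by linarith [ha'.2])
      have hlow : 0 ≤ m a' := (hmem a').1
      rw [abs_le, ← hu₀def]
      constructor <;> linarith
    · push_neg at hcase
      have hu₀pos : 0 < u₀ := lt_trans hε hcase
      have hba : deriv L 0 < a := by
        by_contra h
        have h2 := hm0 a (not_lt.1 h)
        rw [← hu₀def] at h2
        linarith
      have hLu₀ : deriv L u₀ = a := hu₀def ▸ (hspec a hba).2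
      obtain ⟨uM, huMdef⟩ : ∃ uM : ℝ, uM = u₀ - ε := ⟨_, rfl⟩
      have huMmem : uM ∈ Ico (0:ℝ) 1 := ⟨by rw [huMdef]; linarith, by rw [huMdef]; have := hu₀.2; linarith⟩
      have hlt : deriv L uM < a := by
        have h2 := hmono huMmem hu₀ (by rw [huMdef]; linarith)
        rw [hLu₀] at h2; exact h2
      refine ⟨min (deriv L uP - a) (a - deriv L uM), lt_min (by linarith) (by linarith), fun a' ha' => ?_⟩
      rw [abs_lt] at ha'
      have h1 : a' - a < deriv L uP - a := lt_of_lt_of_le ha'.2 (min_le_left _ _)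
      have h3 : -(a - deriv L uM) < a' - a := lt_of_le_of_lt (neg_le_neg (min_le_right _ _)) ha'.1
      have hup : m a' ≤ uP := hA a' uP huPmem (by linarith)
      have hlow : uM ≤ m a' := hB a' uM huMmem (by linarith)
      rw [abs_le, ← hu₀def]
      rw [huMdef] at hlow
      constructor <;> linarith
  have hcontm : Continuous m := by
    rw [continuous_iff_continuousAt]
    intro a
    rw [Metric.continuousAt_iff]
    intro ε hε
    obtain ⟨δ, hδ, hδ'⟩ := key a (ε/2) (by linarith)
    refine ⟨δ, hδ, fun {a'} ha' => ?_⟩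
    rw [Real.dist_eq] at ha' ⊢
    have := hδ' a' ha'
    linarith
  -- minimality
  refine ⟨m, hmem, hmono', hcontm, hm0, ?_⟩
  intro a
  by_cases h : deriv L 0 < a
  · apply min_piece L hd a (m a) (hmem a)
    · intro u hu hlt
      have := hmono hu (hmem a) hlt
      rw [(hspec a h).2] at this; exact this
    · intro u hu hgt
      have := hmono (hmem a) hu hgt
      rw [(hspec a h).2] at this; exact this
  · rw [hm0 a (not_lt.1 h)]
    apply min_piece L hd a 0 h01
    · intro u hu hlt
      exact absurd hlt (not_lt.2 hu.1)
    · intro u hu hgt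
      have := hmono h01 hu hgt
      have h2 := not_lt.1 h
      linarith

theorem stmt_1
    (r mu lam sig : ℝ) (hmu : 0 ≤ mu) (hr : mu < r) (hlam : 0 ≤ lam) (hsig : 0 ≤ sig)
    (L : ℝ → ℝ)
    (hL : ContDiffOn ℝ 2 L (Set.Ico 0 1))
    (hL0 : L 0 = 0)
    (hL1 : ∀ u ∈ Set.Ico (0:ℝ) 1, 0 < deriv L u)
    (hL2 : ∀ u ∈ Set.Ico (0:ℝ) 1, 0 < deriv (deriv L) u)
    (hLtop : Filter.Tendsto L (nhdsWithin 1 (Set.Iio 1)) Filter.atTop)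
    (x : ℝ) (hx : 0 < x) (p : ℝ) (hp : p ∈ Set.Ioc (0:ℝ) 1) :
    ConcaveOn ℝ (Set.Ici 0) (fun ξ => Ham L lam r mu sig x ξ p) ∧
    ∃ g : ℝ → ℝ,
      (∀ ξ ∈ Set.Ici (0:ℝ),
        HasDerivWithinAt (fun ξ' => Ham L lam r mu sig x ξ' p) (g ξ) (Set.Ici 0) ξ) ∧
      ContinuousOn g (Set.Ici 0) ∧
      AntitoneOn g (Set.Ici 0) ∧
      g 0 = ((lam + r) / p - lam + sig ^ 2 - mu) * x ∧
      (∀ ξ : ℝ, 0 ≤ ξ →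
        ((lam + r) * x - 1) / p + (sig ^ 2 - lam - mu) * x ≤ g ξ ∧
        g ξ ≤ ((lam + r) / p - lam + sig ^ 2 - mu) * x) := by
  have h01 : (0:ℝ) ∈ Ico (0:ℝ) 1 := ⟨le_refl 0, one_pos⟩
  have hp0 : (0:ℝ) < p := hp.1
  have hpne : p ≠ 0 := ne_of_gt hp0
  have hb : 0 < deriv L 0 := hL1 0 h01
  have hd : ∀ u ∈ Ico (0:ℝ) 1, DifferentiableAt ℝ L u := by
    intro u hu
    by_contra h
    have := hL1 u hu
    rw [deriv_zero_of_not_differentiableAt h] at this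
    exact lt_irrefl 0 this
  have hd2 : ∀ u ∈ Ico (0:ℝ) 1, DifferentiableAt ℝ (deriv L) u := by
    intro u hu
    by_contra h
    have := hL2 u hu
    rw [deriv_zero_of_not_differentiableAt h] at this
    exact lt_irrefl 0 this
  have hcont' : ContinuousOn (deriv L) (Ico (0:ℝ) 1) :=
    fun u hu => ((hd2 u hu).continuousAt).continuousWithinAt
  have hmono' : StrictMonoOn (deriv L) (Ico (0:ℝ) 1) := by
    apply strictMonoOn_of_deriv_pos (convex_Ico 0 1) hcont'
    rw [interior_Ico]
    intro u hu
    exact hL2 u ⟨hu.1.le, hu.2⟩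
  have hLcont : ContinuousOn L (Ico (0:ℝ) 1) :=
    fun u hu => ((hd u hu).continuousAt).continuousWithinAt
  have hLmono : StrictMonoOn L (Ico (0:ℝ) 1) := by
    apply strictMonoOn_of_deriv_pos (convex_Ico 0 1) hLcont
    rw [interior_Ico]
    intro u hu
    exact hL1 u ⟨hu.1.le, hu.2⟩
  have hLnonneg : ∀ u ∈ Ico (0:ℝ) 1, 0 ≤ L u := by
    intro u hu
    rcases eq_or_lt_of_le hu.1 with h | h
    · rw [← h, hL0]
    · rw [← hL0]; exact (hLmono h01 hu h).le
  have hsurj : ∀ a : ℝ, ∃ v ∈ Ioo (0:ℝ) 1, a ≤ deriv L v := by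
    intro a
    have h1 : ∀ᶠ v in nhdsWithin (1:ℝ) (Iio 1), a ≤ L v := hLtop.eventually_ge_atTop a
    have h2 : Ioo (0:ℝ) 1 ∈ nhdsWithin (1:ℝ) (Iio 1) :=
      Ioo_mem_nhdsLT_of_mem (⟨zero_lt_one, le_refl 1⟩ : (1:ℝ) ∈ Ioc (0:ℝ) 1)
    obtain ⟨v, hva, hv⟩ := (h1.and (eventually_of_mem h2 (fun y hy => hy))).exists
    refine ⟨v, hv, ?_⟩
    have hIcc : Icc (0:ℝ) v ⊆ Ico 0 1 := fun u hu => ⟨hu.1, lt_of_le_of_lt hu.2 hv.2⟩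
    obtain ⟨c, hc, hceq⟩ := exists_hasDerivAt_eq_slope L (deriv L) hv.1 (hLcont.mono hIcc)
      (fun u hu => (hd u ⟨hu.1.le, lt_trans hu.2 hv.2⟩).hasDerivAt)
    have hvmem : v ∈ Ico (0:ℝ) 1 := ⟨hv.1.le, hv.2⟩
    have hcmem : c ∈ Ico (0:ℝ) 1 := ⟨hc.1.le, lt_trans hc.2 hv.2⟩
    have h3 : deriv L c ≤ deriv L v := (hmono' hcmem hvmem hc.2).le
    have h4 : deriv L c = L v / v := by rw [hceq, hL0]; ring_nf
    have h5 : L v ≤ L v / v := by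
      rw [le_div_iff₀ hv.1]
      nlinarith [hLnonneg v hvmem, hv.2]
    linarith
  obtain ⟨m, hmem, hmmono, hmcont, hm0, hmin⟩ := exists_min L hd hmono' hcont' hsurj
  set q : ℝ → ℝ := fun ξ => m (ξ / p) with hq
  set f : ℝ → ℝ := fun ξ => sInf ((fun ω => L ω - ξ / p * ω) '' Ico 0 1) with hf
  have hqmem : ∀ ξ : ℝ, q ξ ∈ Ico (0:ℝ) 1 := fun ξ => hmem _
  have hbdd : ∀ ξ : ℝ, BddBelow ((fun ω => L ω - ξ / p * ω) '' Ico 0 1) := by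
    intro ξ
    refine ⟨-|ξ/p|, ?_⟩
    rintro y ⟨ω, hω, rfl⟩
    have h0 : 0 ≤ L ω := hLnonneg ω hω
    have h1 : |ξ/p * ω| ≤ |ξ/p| := by
      rw [abs_mul]
      have hω1 : |ω| ≤ 1 := abs_le.2 ⟨by linarith [hω.1], hω.2.le⟩
      nlinarith [abs_nonneg (ξ/p)]
    have h2 := le_abs_self (ξ/p * ω)
    simp only
    linarith
  have hne : ∀ ξ : ℝ, ((fun ω => L ω - ξ / p * ω) '' Ico 0 1).Nonempty :=
    fun ξ => ⟨L 0 - ξ/p * 0, ⟨0, h01, rfl⟩⟩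
  have hle : ∀ ξ : ℝ, ∀ ω ∈ Ico (0:ℝ) 1, f ξ ≤ L ω - ξ/p * ω :=
    fun ξ ω hω => csInf_le (hbdd ξ) ⟨ω, hω, rfl⟩
  have hval : ∀ ξ : ℝ, f ξ = L (q ξ) - ξ/p * q ξ := by
    intro ξ
    apply le_antisymm
    · exact hle ξ (q ξ) (hqmem ξ)
    · apply le_csInf (hne ξ)
      rintro y ⟨ω, hω, rfl⟩
      exact hmin (ξ/p) ω hω
  have hqc : Continuous q := hmcont.comp (continuous_id.div_const p)
  -- derivative of f
  have hderiv : ∀ ξ : ℝ, HasDerivAt f (-(q ξ) / p) ξ := by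
    intro ξ
    rw [hasDerivAt_iff_isLittleO, Asymptotics.isLittleO_iff]
    intro ε hε
    have hev : ∀ᶠ ξ' in nhds ξ, |q ξ' - q ξ| < ε * p := by
      have h2 : ∀ᶠ ξ' in nhds ξ, dist (q ξ') (q ξ) < ε * p :=
        Metric.tendsto_nhds.1 hqc.continuousAt.tendsto (ε * p) (by positivity)
      simpa [Real.dist_eq] using h2
    filter_upwards [hev] with ξ' hq'
    have h1 : f ξ' ≤ L (q ξ) - ξ'/p * q ξ := hle ξ' (q ξ) (hqmem ξ)
    have h2 : f ξ ≤ L (q ξ') - ξ/p * q ξ' := hle ξ (q ξ') (hqmem ξ')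
    have e1 : f ξ = L (q ξ) - ξ/p * q ξ := hval ξ
    have e2 : f ξ' = L (q ξ') - ξ'/p * q ξ' := hval ξ'
    simp only [smul_eq_mul, Real.norm_eq_abs]
    have herr1 : f ξ' - f ξ - (ξ' - ξ) * (-(q ξ) / p) ≤ 0 := by
      have h3 : f ξ' - f ξ ≤ ξ / p * q ξ - ξ' / p * q ξ := by rw [e1]; linarith
      have h4 : (ξ' - ξ) * (-(q ξ) / p) = ξ / p * q ξ - ξ' / p * q ξ := by ring
      linarith
    have herr2 : (ξ' - ξ) * ((q ξ - q ξ')/p) ≤ f ξ' - f ξ - (ξ' - ξ) * (-(q ξ) / p) := by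
      have h3 : ξ/p * q ξ' - ξ'/p * q ξ' ≤ f ξ' - f ξ := by rw [e2]; linarith
      have h4 : (ξ' - ξ) * ((q ξ - q ξ')/p) + (ξ' - ξ) * (-(q ξ)/p) = ξ/p * q ξ' - ξ'/p * q ξ' := by
        ring
      linarith
    have habs : |(ξ' - ξ) * ((q ξ - q ξ')/p)| ≤ ε * |ξ' - ξ| := by
      rw [abs_mul, abs_div, abs_of_pos hp0]
      have h5 : |q ξ - q ξ'| / p ≤ ε := by
        rw [div_le_iff₀ hp0, abs_sub_comm]
        linarith
      calc |ξ' - ξ| * (|q ξ - q ξ'| / p) ≤ |ξ' - ξ| * ε :=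
            mul_le_mul_of_nonneg_left h5 (abs_nonneg _)
        _ = ε * |ξ' - ξ| := mul_comm _ _
    rw [abs_le]
    constructor
    · have := neg_abs_le ((ξ' - ξ) * ((q ξ - q ξ')/p))
      linarith
    · have : (0:ℝ) ≤ ε * |ξ' - ξ| := by positivity
      linarith
  -- derivative of Ham
  set C : ℝ := ((lam + r) / p - lam + sig ^ 2 - mu) * x with hC
  set g : ℝ → ℝ := fun ξ => C - q ξ / p with hg
  have hHamEq : ∀ ξ : ℝ, Ham L lam r mu sig x ξ p = f ξ + C * ξ := by
    intro ξ; simp only [Ham, hf, hC]; try ring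
  have hHam : ∀ ξ : ℝ, HasDerivAt (fun ξ' => Ham L lam r mu sig x ξ' p) (g ξ) ξ := by
    intro ξ
    have h2 : HasDerivAt (fun ξ' : ℝ => C * ξ') C ξ := by
      simpa using (hasDerivAt_id ξ).const_mul C
    have h3 := (hderiv ξ).add h2
    have h4 : -(q ξ) / p + C = g ξ := by simp only [hg]; ring
    rw [h4] at h3
    have h5 : (fun ξ' => Ham L lam r mu sig x ξ' p) = fun ξ' => f ξ' + C * ξ' := by
      funext ξ'; exact hHamEq ξ'
    rw [h5]
    exact h3
  constructor
  · -- concavity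
    refine ⟨convex_Ici 0, ?_⟩
    intro ξ hξ ξ' hξ' t s ht hs hts
    simp only [smul_eq_mul]
    rw [hHamEq, hHamEq, hHamEq]
    have hkey : t * f ξ + s * f ξ' ≤ f (t * ξ + s * ξ') := by
      apply le_csInf (hne _)
      rintro y ⟨ω, hω, rfl⟩
      have i1 : f ξ ≤ L ω - ξ/p * ω := hle ξ ω hω
      have i2 : f ξ' ≤ L ω - ξ'/p * ω := hle ξ' ω hω
      have e : t * (L ω - ξ/p * ω) + s * (L ω - ξ'/p * ω)
          = (t + s) * L ω - (t * ξ + s * ξ')/p * ω := by ring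
      rw [hts, one_mul] at e
      have i3 : t * f ξ ≤ t * (L ω - ξ/p * ω) := mul_le_mul_of_nonneg_left i1 ht
      have i4 : s * f ξ' ≤ s * (L ω - ξ'/p * ω) := mul_le_mul_of_nonneg_left i2 hs
      simp only
      linarith
    have elin : C * (t * ξ + s * ξ') = t * (C * ξ) + s * (C * ξ') := by ring
    linarith
  · refine ⟨g, ?_, ?_, ?_, ?_, ?_⟩
    · exact fun ξ _ => (hHam ξ).hasDerivWithinAt
    · exact (continuous_const.sub (hqc.div_const p)).continuousOn
    · intro ξ _ ξ' _ hξξ'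
      have h1 : q ξ ≤ q ξ' := hmmono (by gcongr)
      have h2 : q ξ / p ≤ q ξ' / p := by gcongr
      simp only [hg]
      linarith
    · have h0 : q 0 = 0 := by
        simp only [hq, zero_div]
        exact hm0 0 hb.le
      simp only [hg, h0, zero_div, sub_zero, hC]
    · intro ξ hξ
      have h1 : 0 ≤ q ξ := (hqmem ξ).1
      have h2 : q ξ < 1 := (hqmem ξ).2
      have h3 : q ξ / p ≤ 1 / p := by gcongr
      have h4 : 0 ≤ q ξ / p := div_nonneg h1 hp0.le
      constructor
      · have e : ((lam + r) * x - 1) / p + (sig ^ 2 - lam - mu) * x = C - 1/p := by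
          simp only [hC]; ring
        simp only [hg]
        linarith
      · simp only [hg, hC]
        linarith
end

section
/- For every fixed x > 0 and p ∈ (0,1]: if 1/p > ((λ+r)/p − λ + σ² − μ)·x, then H(x,ξ,p) → −∞ as ξ → +∞; if instead 1/p ≤ ((λ+r)/p − λ + σ² − μ)·x, then H(x,ξ,p) → +∞ as ξ → +∞. -/
open Set Filter

/-!
Write `a = ξ / p` and `k = ((λ+r)/p − λ + σ² − μ)·x·p`, so that `H = m(a) + k·a` with
`m(a) = inf_{ω ∈ [0,1)} (L ω − a ω)`. Testing the infimum at a single `ω₀ ∈ (k, 1)` gives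
`H ≤ L ω₀ − (ω₀ − k)·a → −∞` when `k < 1`. Conversely `m(a) + a = inf (L ω + a (1 − ω))`
tends to `+∞`: near `ω = 1` because `L` blows up there, and away from `1` because the weight
`1 − ω` is bounded below; hence `H ≥ m(a) + a → +∞` when `k ≥ 1`. Continuity of `L` and its
blow-up at `1` make `L` bounded below on `[0,1)`, so `m(a)` is a genuine infimum and not the junk
value of `sInf`.
-/

open scoped Topology

theorem ContinuousOn.bddBelow_image_Ico_of_tendsto_atTop {f : ℝ → ℝ} {a b : ℝ}
    (hf : ContinuousOn f (Ico a b)) (hfb : Tendsto f (𝓝[<] b) atTop) :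
    BddBelow (f '' Ico a b) := by
  obtain ⟨l, hlb, hl⟩ := mem_nhdsLT_iff_exists_Ioo_subset.1
    (hfb.eventually (eventually_ge_atTop 0))
  have hcover : Ico a b ⊆ Icc a l ∪ Ioo l b := fun ω hω => by
    rcases le_or_gt ω l with h | h
    exacts [Or.inl ⟨hω.1, h⟩, Or.inr ⟨h, hω.2⟩]
  refine (BddBelow.union ?_ ⟨0, ?_⟩).mono ((image_mono hcover).trans (image_union ..).le)
  · exact isCompact_Icc.bddBelow_image
      (hf.mono fun ω hω => ⟨hω.1, hω.2.trans_lt (mem_Iio.1 hlb)⟩)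
  · rintro _ ⟨ω, hω, rfl⟩
    exact hl hω

noncomputable def infCost (L : ℝ → ℝ) (a : ℝ) : ℝ :=
  sInf ((fun ω => L ω - a * ω) '' Ico 0 1)

section infCost

variable {L : ℝ → ℝ}

theorem infCost_le (hL : BddBelow (L '' Ico 0 1)) {a ω : ℝ} (ha : 0 ≤ a)
    (hω : ω ∈ Ico (0 : ℝ) 1) : infCost L a ≤ L ω - a * ω := by
  obtain ⟨B, hB⟩ := hL
  refine csInf_le ⟨B - a, ?_⟩ ⟨ω, hω, rfl⟩
  rintro _ ⟨ν, hν, rfl⟩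
  have := hB ⟨ν, hν, rfl⟩
  nlinarith [hν.2]

theorem tendsto_infCost_add_atTop (hL : BddBelow (L '' Ico 0 1))
    (hLtop : Tendsto L (𝓝[<] 1) atTop) :
    Tendsto (fun a => infCost L a + a) atTop atTop := by
  obtain ⟨B, hB⟩ := hL
  refine tendsto_atTop.2 fun M => ?_
  obtain ⟨l, hl, hLM⟩ := mem_nhdsLT_iff_exists_Ioo_subset.1
    (hLtop.eventually (eventually_ge_atTop M))
  have hl1 : 0 < 1 - l := sub_pos.2 hl
  filter_upwards [eventually_ge_atTop 0, eventually_ge_atTop ((M - B) / (1 - l))]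
    with a ha₀ haM
  have haM : M - B ≤ a * (1 - l) := (div_le_iff₀ hl1).1 haM
  suffices M - a ≤ infCost L a by linarith
  refine le_csInf ((nonempty_Ico.2 one_pos).image _) ?_
  rintro _ ⟨ω, hω, rfl⟩
  have hBω : B ≤ L ω := hB ⟨ω, hω, rfl⟩
  have hω1 : 0 ≤ a * (1 - ω) := mul_nonneg ha₀ (sub_nonneg.2 hω.2.le)
  rcases le_or_gt ω l with hωl | hωl
  · nlinarith
  · have : M ≤ L ω := hLM ⟨hωl, hω.2⟩
    linarith

theorem tendsto_infCost_add_mul_atBot (hL : BddBelow (L '' Ico 0 1)) {k : ℝ} (hk : k < 1) :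
    Tendsto (fun a => infCost L a + k * a) atTop atBot := by
  obtain ⟨ω₀, hω₀, hkω₀⟩ : ∃ ω₀ ∈ Ico (0 : ℝ) 1, k < ω₀ :=
    ⟨max 0 ((k + 1) / 2), ⟨le_max_left _ _, max_lt one_pos (by linarith)⟩,
      (by linarith : k < (k + 1) / 2).trans_le (le_max_right _ _)⟩
  have hlin : Tendsto (fun a => L ω₀ + (k - ω₀) * a) atTop atBot :=
    tendsto_atBot_add_const_left _ _ (tendsto_id.const_mul_atTop_of_neg (by linarith))
  refine tendsto_atBot_mono' _ ?_ hlin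
  filter_upwards [eventually_ge_atTop 0] with a ha
  linarith [infCost_le hL ha hω₀]

theorem tendsto_infCost_add_mul_atTop (hL : BddBelow (L '' Ico 0 1))
    (hLtop : Tendsto L (𝓝[<] 1) atTop) {k : ℝ} (hk : 1 ≤ k) :
    Tendsto (fun a => infCost L a + k * a) atTop atTop := by
  refine tendsto_atTop_mono' _ ?_ (tendsto_infCost_add_atTop hL hLtop)
  filter_upwards [eventually_ge_atTop 0] with a ha
  nlinarith

end infCost

theorem stmt_2_general
    (r mu lam sig : ℝ)
    (L : ℝ → ℝ)
    (hL : ContDiffOn ℝ 2 L (Set.Ico 0 1))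
    (hLtop : Filter.Tendsto L (nhdsWithin 1 (Set.Iio 1)) Filter.atTop)
    (x : ℝ) (p : ℝ) (hp : p ∈ Set.Ioc (0:ℝ) 1) :
    (1 / p > ((lam + r) / p - lam + sig ^ 2 - mu) * x →
      Filter.Tendsto (fun ξ => Ham L lam r mu sig x ξ p) Filter.atTop Filter.atBot) ∧
    (1 / p ≤ ((lam + r) / p - lam + sig ^ 2 - mu) * x →
      Filter.Tendsto (fun ξ => Ham L lam r mu sig x ξ p) Filter.atTop Filter.atTop) := by
  have hp0 : 0 < p := hp.1
  have hbdd := hL.continuousOn.bddBelow_image_Ico_of_tendsto_atTop hLtop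
  set c := ((lam + r) / p - lam + sig ^ 2 - mu) * x
  have hHam : (fun ξ => Ham L lam r mu sig x ξ p) =
      (fun a => infCost L a + c * p * a) ∘ (· / p) := by
    ext ξ
    rw [Function.comp_apply, mul_assoc, mul_div_cancel₀ _ hp0.ne']
    rfl
  have hξp : Tendsto (· / p) atTop atTop := tendsto_id.atTop_div_const hp0
  rw [hHam]
  constructor
  · intro hc
    exact (tendsto_infCost_add_mul_atBot hbdd ((lt_div_iff₀ hp0).1 hc)).comp hξp
  · intro hc
    exact (tendsto_infCost_add_mul_atTop hbdd hLtop ((div_le_iff₀ hp0).1 hc)).comp hξp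

theorem stmt_2
    (r mu lam sig : ℝ) (hmu : 0 ≤ mu) (hr : mu < r) (hlam : 0 ≤ lam) (hsig : 0 ≤ sig)
    (L : ℝ → ℝ)
    (hL : ContDiffOn ℝ 2 L (Set.Ico 0 1))
    (hL0 : L 0 = 0)
    (hL1 : ∀ u ∈ Set.Ico (0:ℝ) 1, 0 < deriv L u)
    (hL2 : ∀ u ∈ Set.Ico (0:ℝ) 1, 0 < deriv (deriv L) u)
    (hLtop : Filter.Tendsto L (nhdsWithin 1 (Set.Iio 1)) Filter.atTop)
    (x : ℝ) (hx : 0 < x) (p : ℝ) (hp : p ∈ Set.Ioc (0:ℝ) 1) :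
    (1 / p > ((lam + r) / p - lam + sig ^ 2 - mu) * x →
      Filter.Tendsto (fun ξ => Ham L lam r mu sig x ξ p) Filter.atTop Filter.atBot) ∧
    (1 / p ≤ ((lam + r) / p - lam + sig ^ 2 - mu) * x →
      Filter.Tendsto (fun ξ => Ham L lam r mu sig x ξ p) Filter.atTop Filter.atTop) :=
  stmt_2_general r mu lam sig L hL hLtop x p hp
end

section
/- Let σ = 0. Let x* > 0, B > 0, let p* : [0,x*] → (0,1] be continuous, and let V* : [0,x*] → [0,∞) be continuously differentiable with V*(x*) = B and r·V*(x) = H(x, (V*)'(x), p*(x)) for all x ∈ [0,x*]. Let u : [0,∞) → [0,1) be measurable, let x₀ ∈ [0,x*], and let x(·) be an absolutely continuous function with x(0) = x₀ satisfying ẋ(t) = ((λ+r)/p*(x(t)) − λ − μ)·x(t) − u(t)/p*(x(t)) and x(t) ∈ [0,x*] for all t < T_b, where T_b = inf{ t ≥ 0 : x(t) = x* } ∈ (0,+∞]. Then ∫₀^{T_b} e^{−rt} L(u(t)) dt + e^{−r T_b} B ≥ V*(x₀), where the term e^{−r T_b} B is taken to be 0 when T_b = +∞. -/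
open Set Filter MeasureTheory
open scoped ENNReal

/-- The deterministic (σ = 0) Hamiltonian
`H(x,ξ,p) = inf_{ω ∈ [0,1)} { L(ω) − (ξ/p)·ω } + ((λ+r)/p − λ − μ)·x·ξ`. -/
noncomputable def Ham0 (L : ℝ → ℝ) (lam r mu x ξ p : ℝ) : ℝ :=
  sInf ((fun ω => L ω - ξ / p * ω) '' Set.Ico 0 1) +
    ((lam + r) / p - lam - mu) * x * ξ

/-! Along an admissible trajectory, `t ↦ e^{-rt} V*(x(t))` has derivative
`e^{-rt} (V*'(x) ẋ - r V*(x)) ≥ -e^{-rt} L(u(t))`, because the infimum in the HJB equation is at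
most its value at `ω = u(t)`. Where `x(t) = 0` the trajectory is at a minimum, so `ẋ(t) = 0`, and
the HJB equation at `ω = 0` gives `r V*(0) ≤ 0 ≤ L(u(t))`. Integrating over `[0, T]` for `T < T_b`
gives `V*(x₀) ≤ ∫₀ᵀ e^{-rt} L(u) + e^{-rT} V*(x(T))`. The HJB equation with `V* ≥ 0` also forces
`V*' ≥ 0`, so `V*(x(T)) ≤ V*(x*) = B`, and letting `T → T_b` gives the claim. -/

open Real

lemma nonneg_of_deriv_pos_of_left_eq_zero {L : ℝ → ℝ} {a b : ℝ} (hL : ContinuousOn L (Ico a b))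
    (hLa : L a = 0) (hL' : ∀ x ∈ Ioo a b, 0 < deriv L x) : ∀ x ∈ Ico a b, 0 ≤ L x := fun x hx =>
  hLa ▸ (strictMonoOn_of_deriv_pos (convex_Ico a b) hL (by rwa [interior_Ico])).monotoneOn
    ⟨le_rfl, hx.1.trans_lt hx.2⟩ hx hx.1

section Hamiltonian

variable {L : ℝ → ℝ} {lam r mu x ξ p v : ℝ}

lemma bddBelow_image_sub_mul_Ico (hL : ∀ ω ∈ Ico (0:ℝ) 1, 0 ≤ L ω) (c : ℝ) :
    BddBelow ((fun ω => L ω - c * ω) '' Ico 0 1) := by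
  refine ⟨-|c|, ?_⟩
  rintro _ ⟨ω, hω, rfl⟩
  have : c * ω ≤ |c| := by nlinarith [le_abs_self c, abs_nonneg c, hω.1, hω.2]
  linarith [hL ω hω]

lemma Ham0_le_add_mul (hL : ∀ ω ∈ Ico (0:ℝ) 1, 0 ≤ L ω) {ω : ℝ} (hω : ω ∈ Ico 0 1) :
    Ham0 L lam r mu x ξ p ≤ L ω + ξ * (((lam + r) / p - lam - mu) * x - ω / p) := by
  have hinf := csInf_le (bddBelow_image_sub_mul_Ico hL (ξ / p)) (mem_image_of_mem _ hω)
  rw [Ham0]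
  linarith [show L ω + ξ * (((lam + r) / p - lam - mu) * x - ω / p)
    = L ω - ξ / p * ω + ((lam + r) / p - lam - mu) * x * ξ by ring]

lemma Ham0_le_mul (hL : ∀ ω ∈ Ico (0:ℝ) 1, 0 ≤ L ω) (hL0 : L 0 = 0) :
    Ham0 L lam r mu x ξ p ≤ ξ * (((lam + r) / p - lam - mu) * x) := by
  simpa [hL0] using (Ham0_le_add_mul hL ⟨le_rfl, one_pos⟩ : Ham0 L lam r mu x ξ p ≤ _)

lemma nonneg_of_eq_Ham0 (hL : ∀ ω ∈ Ico (0:ℝ) 1, 0 ≤ L ω) (hL0 : L 0 = 0) (hlam : 0 ≤ lam)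
    (hmu : 0 ≤ mu) (hr : mu < r) (hx : 0 < x) (hp : p ∈ Ioc 0 1) (hv : 0 ≤ v)
    (h : r * v = Ham0 L lam r mu x ξ p) : 0 ≤ ξ := by
  have hHJB := h ▸ Ham0_le_mul hL hL0
  have hlr : lam + r ≤ (lam + r) / p := (le_div_iff₀ hp.1).2 (by nlinarith [hp.2])
  have hc : 0 < ((lam + r) / p - lam - mu) * x := mul_pos (by linarith) hx
  by_contra! hξ
  nlinarith [mul_neg_of_neg_of_pos hξ hc]

lemma monotoneOn_of_eq_Ham0 (hL : ∀ ω ∈ Ico (0:ℝ) 1, 0 ≤ L ω) (hL0 : L 0 = 0) (hlam : 0 ≤ lam)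
    (hmu : 0 ≤ mu) (hr : mu < r) {xs : ℝ} {V pstar : ℝ → ℝ}
    (hp : ∀ x ∈ Icc (0:ℝ) xs, pstar x ∈ Ioc 0 1) (hV : ∀ x ∈ Icc 0 xs, 0 ≤ V x)
    (hVc : ContDiffOn ℝ 1 V (Icc 0 xs))
    (hHJ : ∀ x ∈ Icc 0 xs, r * V x = Ham0 L lam r mu x (deriv V x) (pstar x)) :
    MonotoneOn V (Icc 0 xs) :=
  monotoneOn_of_deriv_nonneg (convex_Icc 0 xs) hVc.continuousOn
    ((hVc.differentiableOn one_ne_zero).mono interior_subset) fun x hx => by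
      rw [interior_Icc] at hx
      have hx' := Ioo_subset_Icc_self hx
      exact nonneg_of_eq_Ham0 hL hL0 hlam hmu hr hx.1 (hp x hx') (hV x hx') (hHJ x hx')

end Hamiltonian

theorem le_setIntegral_add_of_hjb {V X d f : ℝ → ℝ} {a b r T : ℝ} (hT : 0 ≤ T)
    (hV : DifferentiableOn ℝ V (Icc a b))
    (hX : ∀ t ∈ Icc 0 T, HasDerivAt X (d t) t ∧ X t ∈ Ico a b)
    (hHJB : ∀ t ∈ Ioo 0 T, X t ∈ Ioo a b → r * V (X t) ≤ f t + deriv V (X t) * d t)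
    (hHJBleft : ∀ t ∈ Ioo 0 T, r * V a ≤ f t)
    (hf : IntegrableOn (fun t => rexp (-r * t) * f t) (Ioc 0 T)) :
    V (X 0) ≤ (∫ t in Ioc 0 T, rexp (-r * t) * f t) + rexp (-r * T) * V (X T) := by
  set g := fun s => rexp (-r * s) * V (X s)
  set G := fun t => -r * rexp (-r * t) * V (X t) +
    rexp (-r * t) * (derivWithin V (Icc a b) (X t) * d t)
  have hXI : MapsTo X (Icc 0 T) (Icc a b) := fun t ht => Ico_subset_Icc_self (hX t ht).2
  have hg : ∀ t ∈ Icc 0 T, HasDerivWithinAt g (G t) (Icc 0 T) t := by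
    intro t ht
    have hVX := (hV _ (hXI ht)).hasDerivWithinAt.comp t (hX t ht).1.hasDerivWithinAt hXI
    have hexp : HasDerivAt (fun s => rexp (-r * s)) (rexp (-r * t) * -r) t := by
      simpa using ((hasDerivAt_id t).const_mul (-r)).exp
    refine (hexp.hasDerivWithinAt.mul hVX).congr_deriv ?_
    simp only [G, Function.comp_apply]
    ring
  have hd : ∀ t ∈ Ioo 0 T, X t = a → d t = 0 := by
    intro t ht hXt
    refine IsLocalMin.hasDerivAt_eq_zero ?_ (hX t (Ioo_subset_Icc_self ht)).1
    filter_upwards [Icc_mem_nhds ht.1 ht.2] with s hs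
    exact hXt ▸ (hX s hs).2.1
  have hG : ∀ t ∈ Ioo 0 T, -G t ≤ rexp (-r * t) * f t := by
    intro t ht
    obtain ⟨hXa, hXb⟩ := (hX t (Ioo_subset_Icc_self ht)).2
    have he := exp_pos (-r * t)
    rcases hXa.eq_or_lt with hXa | hXa
    · have := hHJBleft t ht
      simp only [G, hd t ht hXa.symm, ← hXa]
      nlinarith
    · have := hHJB t ht ⟨hXa, hXb⟩
      simp only [G, derivWithin_of_mem_nhds (Icc_mem_nhds hXa hXb)]
      nlinarith
  -- This form of the FTC needs integrability of the bound `e^{-rt} f`, not of the derivative.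
  have hFTC := intervalIntegral.sub_le_integral_of_hasDeriv_right_of_le hT
    (fun t ht => (hg t ht).neg.continuousWithinAt)
    (fun t ht => ((hg t (Ioo_subset_Icc_self ht)).neg.hasDerivAt
      (Icc_mem_nhds ht.1 ht.2)).hasDerivWithinAt)
    (hf.congr_set_ae Ioc_ae_eq_Icc.symm) hG
  rw [intervalIntegral.integral_of_le hT] at hFTC
  simp only [g, Pi.neg_apply, mul_zero, exp_zero, one_mul] at hFTC
  linarith

lemma ofReal_le_lintegral_add {α : Type*} [MeasurableSpace α] {μ : Measure α} {f : α → ℝ}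
    {v c : ℝ} (hfm : AEStronglyMeasurable f μ) (hf : 0 ≤ᵐ[μ] f) (hc : 0 ≤ c)
    (h : Integrable f μ → v ≤ (∫ x, f x ∂μ) + c) :
    ENNReal.ofReal v ≤ (∫⁻ x, ENNReal.ofReal (f x) ∂μ) + ENNReal.ofReal c := by
  by_cases hI : ∫⁻ x, ENNReal.ofReal (f x) ∂μ = ∞
  · simp [hI]
  have hint : Integrable f μ :=
    ⟨hfm, (hasFiniteIntegral_iff_ofReal hf).2 (lt_top_iff_ne_top.2 hI)⟩
  rw [← ofReal_integral_eq_lintegral_ofReal hint hf,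
    ← ENNReal.ofReal_add (integral_nonneg_of_ae hf) hc]
  exact ENNReal.ofReal_le_ofReal (h hint)

theorem le_setIntegral_add_of_eq_Ham0 {L V X pstar u : ℝ → ℝ} {lam r mu xs T : ℝ}
    (hL : ∀ ω ∈ Ico (0:ℝ) 1, 0 ≤ L ω) (hL0 : L 0 = 0) (hV : ContDiffOn ℝ 1 V (Icc 0 xs))
    (hHJ : ∀ x ∈ Icc (0:ℝ) xs, r * V x = Ham0 L lam r mu x (deriv V x) (pstar x))
    (hu : ∀ t, u t ∈ Ico (0:ℝ) 1) (hT : 0 ≤ T)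
    (hX : ∀ t ∈ Icc 0 T, HasDerivAt X
      (((lam + r) / pstar (X t) - lam - mu) * X t - u t / pstar (X t)) t ∧ X t ∈ Ico 0 xs)
    (hf : IntegrableOn (fun t => rexp (-r * t) * L (u t)) (Ioc 0 T)) :
    V (X 0) ≤ (∫ t in Ioc 0 T, rexp (-r * t) * L (u t)) + rexp (-r * T) * V (X T) := by
  obtain ⟨hXT0, hXTxs⟩ := (hX T ⟨hT, le_rfl⟩).2
  have hV0 : r * V 0 ≤ 0 := by
    simpa using (hHJ 0 ⟨le_rfl, hXT0.trans hXTxs.le⟩).trans_le (Ham0_le_mul hL hL0)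
  exact le_setIntegral_add_of_hjb (f := fun t => L (u t)) hT (hV.differentiableOn one_ne_zero)
    hX
    (fun t _ hXt => (hHJ _ (Ioo_subset_Icc_self hXt)).trans_le (Ham0_le_add_mul hL (hu t)))
    (fun t _ => hV0.trans (hL _ (hu t))) hf

lemma le_lintegral_Ioc_add_of_forall_lt {g : ℝ → ℝ≥0∞} {φ : ℝ → ℝ} {v : ℝ≥0∞} {a τ : ℝ}
    (hτ : a < τ) (hφ : ContinuousAt φ τ)
    (h : ∀ T ∈ Ioo a τ, v ≤ (∫⁻ t in Ioc a T, g t) + ENNReal.ofReal (φ T)) :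
    v ≤ (∫⁻ t in Ioc a τ, g t) + ENNReal.ofReal (φ τ) := by
  refine ge_of_tendsto (tendsto_const_nhds.add (ENNReal.tendsto_ofReal
    (hφ.tendsto.mono_left (nhdsWithin_le_nhds (s := Iio τ))))) ?_
  filter_upwards [Ioo_mem_nhdsLT hτ] with T hT
  exact (h T hT).trans (add_le_add (lintegral_mono_set (Ioc_subset_Ioc_right hT.2.le)) le_rfl)

lemma le_lintegral_Ioi_of_forall {g : ℝ → ℝ≥0∞} {φ : ℝ → ℝ} {v : ℝ≥0∞} {a : ℝ}
    (hφ : Tendsto φ atTop (nhds 0))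
    (h : ∀ T, a ≤ T → v ≤ (∫⁻ t in Ioc a T, g t) + ENNReal.ofReal (φ T)) :
    v ≤ ∫⁻ t in Ioi a, g t := by
  have hlim := (tendsto_const_nhds (x := ∫⁻ t in Ioi a, g t)).add (ENNReal.tendsto_ofReal hφ)
  rw [ENNReal.ofReal_zero, add_zero] at hlim
  refine ge_of_tendsto hlim ?_
  filter_upwards [eventually_ge_atTop a] with T hT
  exact (h T hT).trans (add_le_add (lintegral_mono_set Ioc_subset_Ioi_self) le_rfl)

theorem stmt_4_general
    (r mu lam : ℝ) (hmu : 0 ≤ mu) (hr : mu < r) (hlam : 0 ≤ lam)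
    (L : ℝ → ℝ)
    (hL : ContDiffOn ℝ 2 L (Set.Ico 0 1))
    (hL0 : L 0 = 0)
    (hL1 : ∀ u ∈ Set.Ico (0:ℝ) 1, 0 < deriv L u)
    (xs B : ℝ) (hB : 0 < B)
    (pstar : ℝ → ℝ)
    (hpr : ∀ x ∈ Set.Icc (0:ℝ) xs, pstar x ∈ Set.Ioc (0:ℝ) 1)
    (Vs : ℝ → ℝ)
    (hVpos : ∀ x ∈ Set.Icc (0:ℝ) xs, 0 ≤ Vs x)
    (hVc1 : ContDiffOn ℝ 1 Vs (Set.Icc 0 xs))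
    (hVB : Vs xs = B)
    (hHJ : ∀ x ∈ Set.Icc (0:ℝ) xs, r * Vs x = Ham0 L lam r mu x (deriv Vs x) (pstar x))
    (u : ℝ → ℝ) (hu : Measurable u) (hur : ∀ t : ℝ, u t ∈ Set.Ico (0:ℝ) 1)
    (x0 : ℝ)
    (X : ℝ → ℝ) (hX0 : X 0 = x0)
    (Tb : ℝ≥0∞) (hTb0 : 0 < Tb)
    (hTb : Tb = sInf {s : ℝ≥0∞ | ∃ t : ℝ, 0 ≤ t ∧ s = ENNReal.ofReal t ∧ X t = xs})
    (hdyn : ∀ t : ℝ, 0 ≤ t → ENNReal.ofReal t < Tb →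
      HasDerivAt X (((lam + r) / pstar (X t) - lam - mu) * X t - u t / pstar (X t)) t ∧
        X t ∈ Set.Icc 0 xs) :
    (Tb ≠ ⊤ →
      ENNReal.ofReal (Vs x0) ≤
        (∫⁻ t in Set.Ioc (0:ℝ) Tb.toReal, ENNReal.ofReal (Real.exp (-r * t) * L (u t))) +
          ENNReal.ofReal (Real.exp (-r * Tb.toReal) * B)) ∧
    (Tb = ⊤ →
      ENNReal.ofReal (Vs x0) ≤
        ∫⁻ t in Set.Ioi (0:ℝ), ENNReal.ofReal (Real.exp (-r * t) * L (u t))) := by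
  have hLnn := nonneg_of_deriv_pos_of_left_eq_zero hL.continuousOn hL0
    fun ω hω => hL1 ω (Ioo_subset_Ico_self hω)
  have hVmono := monotoneOn_of_eq_Ham0 hLnn hL0 hlam hmu hr hpr hVpos hVc1 hHJ
  have hf0 : ∀ t, 0 ≤ rexp (-r * t) * L (u t) := fun t =>
    mul_nonneg (exp_pos _).le (hLnn _ (hur t))
  have hfm : Measurable fun t => rexp (-r * t) * L (u t) :=
    (by fun_prop : Measurable fun t : ℝ => rexp (-r * t)).mul
      (hL.continuousOn.domRestrict.measurable.comp (hu.subtype_mk (h := hur)))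
  have hcost : ∀ T, 0 ≤ T → ENNReal.ofReal T < Tb →
      ENNReal.ofReal (Vs x0) ≤ (∫⁻ t in Ioc 0 T, ENNReal.ofReal (rexp (-r * t) * L (u t))) +
        ENNReal.ofReal (rexp (-r * T) * B) := by
    intro T hT hTTb
    have hX : ∀ t ∈ Icc 0 T, HasDerivAt X
        (((lam + r) / pstar (X t) - lam - mu) * X t - u t / pstar (X t)) t ∧ X t ∈ Ico 0 xs := by
      intro t ht
      have htTb : ENNReal.ofReal t < Tb := (ENNReal.ofReal_le_ofReal ht.2).trans_lt hTTb
      obtain ⟨hXd, hXt⟩ := hdyn t ht.1 htTb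
      exact ⟨hXd, hXt.1, hXt.2.lt_of_ne fun hxs => htTb.not_ge (hTb ▸ sInf_le ⟨t, ht.1, rfl, hxs⟩)⟩
    obtain ⟨hXT0, hXTxs⟩ := (hX T ⟨hT, le_rfl⟩).2
    have hVT : Vs (X T) ≤ B :=
      hVB ▸ hVmono ⟨hXT0, hXTxs.le⟩ ⟨hXT0.trans hXTxs.le, le_rfl⟩ hXTxs.le
    refine ofReal_le_lintegral_add hfm.aestronglyMeasurable (ae_of_all _ hf0)
      (mul_nonneg (exp_pos _).le hB.le) fun hfi => ?_
    have hDPP := le_setIntegral_add_of_eq_Ham0 hLnn hL0 hVc1 hHJ hur hT hX hfi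
    rw [hX0] at hDPP
    linarith [mul_le_mul_of_nonneg_left hVT (exp_pos (-r * T)).le]
  refine ⟨fun hTop => ?_, fun hTop => ?_⟩
  · exact le_lintegral_Ioc_add_of_forall_lt (ENNReal.toReal_pos hTb0.ne' hTop) (by fun_prop)
      fun T hT => hcost T hT.1.le ((ENNReal.ofReal_lt_iff_lt_toReal hT.1.le hTop).2 hT.2)
  · refine le_lintegral_Ioi_of_forall ?_ fun T hT => hcost T hT (hTop ▸ ENNReal.ofReal_lt_top)
    simpa using (tendsto_exp_atBot.comp
      (tendsto_id.const_mul_atTop_of_neg (by linarith : -r < 0))).mul_const B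

theorem stmt_4
    (r mu lam : ℝ) (hmu : 0 ≤ mu) (hr : mu < r) (hlam : 0 ≤ lam)
    (L : ℝ → ℝ)
    (hL : ContDiffOn ℝ 2 L (Set.Ico 0 1))
    (hL0 : L 0 = 0)
    (hL1 : ∀ u ∈ Set.Ico (0:ℝ) 1, 0 < deriv L u)
    (hL2 : ∀ u ∈ Set.Ico (0:ℝ) 1, 0 < deriv (deriv L) u)
    (hLtop : Filter.Tendsto L (nhdsWithin 1 (Set.Iio 1)) Filter.atTop)
    (xs B : ℝ) (hxs : 0 < xs) (hB : 0 < B)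
    (pstar : ℝ → ℝ) (hpc : ContinuousOn pstar (Set.Icc 0 xs))
    (hpr : ∀ x ∈ Set.Icc (0:ℝ) xs, pstar x ∈ Set.Ioc (0:ℝ) 1)
    (Vs : ℝ → ℝ)
    (hVpos : ∀ x ∈ Set.Icc (0:ℝ) xs, 0 ≤ Vs x)
    (hVc1 : ContDiffOn ℝ 1 Vs (Set.Icc 0 xs))
    (hVB : Vs xs = B)
    (hHJ : ∀ x ∈ Set.Icc (0:ℝ) xs, r * Vs x = Ham0 L lam r mu x (deriv Vs x) (pstar x))
    (u : ℝ → ℝ) (hu : Measurable u) (hur : ∀ t : ℝ, u t ∈ Set.Ico (0:ℝ) 1)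
    (x0 : ℝ) (hx0 : x0 ∈ Set.Icc (0:ℝ) xs)
    (X : ℝ → ℝ) (hX0 : X 0 = x0)
    (Tb : ℝ≥0∞) (hTb0 : 0 < Tb)
    (hTb : Tb = sInf {s : ℝ≥0∞ | ∃ t : ℝ, 0 ≤ t ∧ s = ENNReal.ofReal t ∧ X t = xs})
    (hdyn : ∀ t : ℝ, 0 ≤ t → ENNReal.ofReal t < Tb →
      HasDerivAt X (((lam + r) / pstar (X t) - lam - mu) * X t - u t / pstar (X t)) t ∧
        X t ∈ Set.Icc 0 xs) :
    (Tb ≠ ⊤ →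
      ENNReal.ofReal (Vs x0) ≤
        (∫⁻ t in Set.Ioc (0:ℝ) Tb.toReal, ENNReal.ofReal (Real.exp (-r * t) * L (u t))) +
          ENNReal.ofReal (Real.exp (-r * Tb.toReal) * B)) ∧
    (Tb = ⊤ →
      ENNReal.ofReal (Vs x0) ≤
        ∫⁻ t in Set.Ioi (0:ℝ), ENNReal.ofReal (Real.exp (-r * t) * L (u t))) :=
  stmt_4_general r mu lam hmu hr hlam L hL hL0 hL1 xs B hB pstar hpr Vs hVpos hVc1 hVB hHJ u hu hur
    x0 X hX0 Tb hTb0 hTb hdyn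
end

section
/- Let σ = 0 and let J ⊆ (0,∞) be an interval. Let V, p : J → ℝ be continuously differentiable with p(x) ∈ (0,1) for all x ∈ J, and suppose (r+λ)·(p(x) − 1) = H_ξ(x, V'(x), p(x))·p'(x) for all x ∈ J. Let x : [0,T] → J be continuously differentiable with ẋ(t) = H_ξ(x(t), V'(x(t)), p(x(t))) for all t ∈ [0,T]. Then 1 − p(x(0)) = (1 − p(x(t)))·e^{−(r+λ)t} for every t ∈ [0,T]. -/
open Set Filter

/-- The partial derivative `H_ξ` of the Hamiltonian in its second argument. -/
noncomputable def Hxi0 (L : ℝ → ℝ) (lam r mu x ξ p : ℝ) : ℝ :=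
  deriv (fun ξ' => Ham0 L lam r mu x ξ' p) ξ

/-!
Along a characteristic `ẋ = H_ξ`, the chain rule and the equation for `p` give
`d/dt (1 - p(x(t))) = -p'(x) ẋ = -(r+λ)(p(x) - 1) = (r+λ)(1 - p(x(t)))`,
so `1 - p ∘ x` solves a linear ODE and grows exactly like `e^{(r+λ)t}`.
-/

theorem eq_mul_exp_neg_of_hasDerivAt_const_mul {q : ℝ → ℝ} {k T : ℝ}
    (hq : ∀ s ∈ Icc 0 T, HasDerivAt q (k * q s) s) :
    ∀ t ∈ Icc 0 T, q 0 = q t * Real.exp (-k * t) := by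
  set f : ℝ → ℝ := fun s => q s * Real.exp (-k * s)
  have hf : ∀ s ∈ Icc 0 T, HasDerivAt f 0 s := by
    intro s hs
    have hexp : HasDerivAt (fun u : ℝ => Real.exp (-k * u)) (Real.exp (-k * s) * -k) s :=
      ((hasDerivAt_id s).const_mul (-k)).exp.congr_deriv (by simp)
    exact ((hq s hs).mul hexp).congr_deriv (by ring)
  have hconst := constant_of_has_deriv_right_zero
    (fun s hs => (hf s hs).continuousAt.continuousWithinAt)
    (fun s hs => (hf s (Ico_subset_Icc_self hs)).hasDerivWithinAt)
  intro t ht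
  simpa [f] using (hconst t ht).symm

theorem stmt_5_general
    (r mu lam : ℝ)
    (L : ℝ → ℝ)
    (J : Set ℝ)
    (p V' p' : ℝ → ℝ)
    (hpd : ∀ x ∈ J, HasDerivAt p (p' x) x)
    (hode : ∀ x ∈ J, (r + lam) * (p x - 1) = Hxi0 L lam r mu x (V' x) (p x) * p' x)
    (T : ℝ)
    (X : ℝ → ℝ) (hXJ : ∀ t ∈ Set.Icc (0:ℝ) T, X t ∈ J)
    (hX : ∀ t ∈ Set.Icc (0:ℝ) T,
      HasDerivAt X (Hxi0 L lam r mu (X t) (V' (X t)) (p (X t))) t) :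
    ∀ t ∈ Set.Icc (0:ℝ) T, 1 - p (X 0) = (1 - p (X t)) * Real.exp (-(r + lam) * t) := by
  refine eq_mul_exp_neg_of_hasDerivAt_const_mul (q := fun s => 1 - p (X s)) fun s hs => ?_
  have hchain := ((hpd _ (hXJ s hs)).comp s (hX s hs)).const_sub 1
  exact hchain.congr_deriv (by rw [mul_comm, ← hode _ (hXJ s hs)]; ring)

theorem stmt_5
    (r mu lam : ℝ) (hmu : 0 ≤ mu) (hr : mu < r) (hlam : 0 ≤ lam)
    (L : ℝ → ℝ)
    (hL : ContDiffOn ℝ 2 L (Set.Ico 0 1))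
    (hL0 : L 0 = 0)
    (hL1 : ∀ u ∈ Set.Ico (0:ℝ) 1, 0 < deriv L u)
    (hL2 : ∀ u ∈ Set.Ico (0:ℝ) 1, 0 < deriv (deriv L) u)
    (hLtop : Filter.Tendsto L (nhdsWithin 1 (Set.Iio 1)) Filter.atTop)
    (J : Set ℝ) (hJ : J ⊆ Set.Ioi 0) (hJoc : J.OrdConnected)
    (V p V' p' : ℝ → ℝ)
    (hVd : ∀ x ∈ J, HasDerivAt V (V' x) x) (hV'c : ContinuousOn V' J)
    (hpd : ∀ x ∈ J, HasDerivAt p (p' x) x) (hp'c : ContinuousOn p' J)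
    (hpr : ∀ x ∈ J, p x ∈ Set.Ioo (0:ℝ) 1)
    (hode : ∀ x ∈ J, (r + lam) * (p x - 1) = Hxi0 L lam r mu x (V' x) (p x) * p' x)
    (T : ℝ) (hT : 0 ≤ T)
    (X : ℝ → ℝ) (hXJ : ∀ t ∈ Set.Icc (0:ℝ) T, X t ∈ J)
    (hX : ∀ t ∈ Set.Icc (0:ℝ) T,
      HasDerivAt X (Hxi0 L lam r mu (X t) (V' (X t)) (p (X t))) t) :
    ∀ t ∈ Set.Icc (0:ℝ) T, 1 - p (X 0) = (1 - p (X t)) * Real.exp (-(r + lam) * t) :=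
  stmt_5_general r mu lam L J p V' p' hpd hode T X hXJ hX
end

section
/- Let 0 < a < x* and θ* ∈ (0,1). Suppose p : [a,x*] → (0,1) is continuously differentiable, satisfies p'(x) = (λ+r)·p(x)·(p(x) − 1) / ( ((λ+r) − (λ+μ)p(x))·x ) for all x ∈ [a,x*], and p(x*) = θ*. Then for every x ∈ [a,x*]: p(x) = (θ*·x*/x) · ( (1 − p(x))/(1 − θ*) )^{(r−μ)/(r+λ)}. -/
/-!
Along a solution, `log p + log x - c log (1 - p)` with `c = (r - μ)/(r + λ)` has zero derivative,
so `x p (1 - p)^(-c)` is a first integral of the ODE; equating its values at `x` and at `x*`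
gives the formula.
-/

open Set Filter

noncomputable def bondODERhs (r mu lam q x : ℝ) : ℝ :=
  (lam + r) * q * (q - 1) / (((lam + r) - (lam + mu) * q) * x)

noncomputable def bondLogInvariant (c q x : ℝ) : ℝ :=
  Real.log q + Real.log x - c * Real.log (1 - q)

lemma bondODE_denom_pos {r mu lam q : ℝ} (hlr : 0 < lam + r) (hr : mu < r)
    (hq : q ∈ Icc (0 : ℝ) 1) : 0 < (lam + r) - (lam + mu) * q := by
  have hsplit : (lam + r) - (lam + mu) * q = (lam + r) * (1 - q) + (r - mu) * q := by ring
  rcases eq_or_lt_of_le hq.1 with rfl | hq0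
  · simpa using hlr
  · rw [hsplit]
    nlinarith [hq.2]

lemma hasDerivAt_bondLogInvariant {p : ℝ → ℝ} {d x : ℝ} (c : ℝ) (hp : HasDerivAt p d x)
    (hp0 : p x ≠ 0) (hp1 : 1 - p x ≠ 0) (hx : x ≠ 0) :
    HasDerivAt (fun y => bondLogInvariant c (p y) y) (d / p x + x⁻¹ + c * (d / (1 - p x))) x := by
  have hlog1p : HasDerivAt (fun y => Real.log (1 - p y)) (-d / (1 - p x)) x :=
    (hp.const_sub 1).log hp1
  have h := ((hp.log hp0).add (Real.hasDerivAt_log hx)).sub (hlog1p.const_mul c)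
  rw [show d / p x + x⁻¹ - c * (-d / (1 - p x)) = d / p x + x⁻¹ + c * (d / (1 - p x)) by ring] at h
  exact h

/-- The exponent `c` is chosen so that `1/q + c/(1 - q) = ((λ + r) - (λ + μ) q) / ((λ + r) q (1 - q))`,
which cancels the denominator of the ODE. -/
lemma bondODERhs_logDeriv_eq_zero {r mu lam q x : ℝ} (hlr : 0 < lam + r)
    (hden : 0 < (lam + r) - (lam + mu) * q) (hq0 : q ≠ 0) (hq1 : 1 - q ≠ 0) (hx : x ≠ 0) :
    bondODERhs r mu lam q x / q + x⁻¹
      + (r - mu) / (r + lam) * (bondODERhs r mu lam q x / (1 - q)) = 0 := by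
  have hden' : (lam + r) - q * (lam + mu) ≠ 0 := by rw [mul_comm]; exact hden.ne'
  have hrl : r + lam ≠ 0 := by rw [add_comm]; exact hlr.ne'
  unfold bondODERhs
  field_simp [hden.ne', hden']
  ring

lemma eq_mul_rpow_of_bondLogInvariant_eq {c q q₀ x x₀ : ℝ} (hq : q ∈ Ioo (0 : ℝ) 1)
    (hq₀ : q₀ ∈ Ioo (0 : ℝ) 1) (hx : 0 < x) (hx₀ : 0 < x₀)
    (h : bondLogInvariant c q x = bondLogInvariant c q₀ x₀) :
    q = (q₀ * x₀ / x) * ((1 - q) / (1 - q₀)) ^ c := by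
  have h1q : 0 < 1 - q := sub_pos.2 hq.2
  have h1q₀ : 0 < 1 - q₀ := sub_pos.2 hq₀.2
  have hq₀x₀ : 0 < q₀ * x₀ := mul_pos hq₀.1 hx₀
  have hratio : 0 < (1 - q) / (1 - q₀) := div_pos h1q h1q₀
  have hscale : 0 < q₀ * x₀ / x := div_pos hq₀x₀ hx
  have hpow : 0 < ((1 - q) / (1 - q₀)) ^ c := Real.rpow_pos_of_pos hratio c
  refine Real.log_injOn_pos hq.1 (mul_pos hscale hpow) ?_
  rw [Real.log_mul hscale.ne' hpow.ne', Real.log_div hq₀x₀.ne' hx.ne',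
    Real.log_mul hq₀.1.ne' hx₀.ne', Real.log_rpow hratio, Real.log_div h1q.ne' h1q₀.ne']
  unfold bondLogInvariant at h
  linarith

theorem stmt_6_general
    (r mu lam : ℝ) (hmu : 0 ≤ mu) (hr : mu < r) (hlam : 0 ≤ lam)
    (a xs th : ℝ) (ha : 0 < a) (hax : a < xs)
    (p : ℝ → ℝ)
    (hpr : ∀ x ∈ Set.Icc a xs, p x ∈ Set.Ioo (0:ℝ) 1)
    (hode : ∀ x ∈ Set.Icc a xs,
      HasDerivAt p ((lam + r) * p x * (p x - 1) / (((lam + r) - (lam + mu) * p x) * x)) x)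
    (hpx : p xs = th) :
    ∀ x ∈ Set.Icc a xs,
      p x = (th * xs / x) * ((1 - p x) / (1 - th)) ^ ((r - mu) / (r + lam)) := by
  have hlr : 0 < lam + r := by linarith
  have hinv_deriv : ∀ x ∈ Icc a xs,
      HasDerivAt (fun y => bondLogInvariant ((r - mu) / (r + lam)) (p y) y) 0 x := by
    intro x hx
    obtain ⟨hp0, hp1⟩ := hpr x hx
    have hx0 : x ≠ 0 := (ha.trans_le hx.1).ne'
    have h1p : 1 - p x ≠ 0 := (sub_pos.2 hp1).ne'
    have hden := bondODE_denom_pos hlr hr (Ioo_subset_Icc_self (hpr x hx))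
    exact (hasDerivAt_bondLogInvariant _ (hode x hx) hp0.ne' h1p hx0).congr_deriv
      (bondODERhs_logDeriv_eq_zero hlr hden hp0.ne' h1p hx0)
  have hinv_const := constant_of_has_deriv_right_zero
    (fun x hx => (hinv_deriv x hx).continuousAt.continuousWithinAt)
    (fun x hx => (hinv_deriv x (Ico_subset_Icc_self hx)).hasDerivWithinAt)
  intro x hx
  have hxs : xs ∈ Icc a xs := ⟨hax.le, le_rfl⟩
  rw [← hpx]
  exact eq_mul_rpow_of_bondLogInvariant_eq (hpr x hx) (hpr xs hxs) (ha.trans_le hx.1)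
    (ha.trans hax) ((hinv_const x hx).trans (hinv_const xs hxs).symm)

theorem stmt_6
    (r mu lam : ℝ) (hmu : 0 ≤ mu) (hr : mu < r) (hlam : 0 ≤ lam)
    (a xs th : ℝ) (ha : 0 < a) (hax : a < xs) (hth : th ∈ Set.Ioo (0:ℝ) 1)
    (p : ℝ → ℝ)
    (hpr : ∀ x ∈ Set.Icc a xs, p x ∈ Set.Ioo (0:ℝ) 1)
    (hode : ∀ x ∈ Set.Icc a xs,
      HasDerivAt p ((lam + r) * p x * (p x - 1) / (((lam + r) - (lam + mu) * p x) * x)) x)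
    (hpx : p xs = th) :
    ∀ x ∈ Set.Icc a xs,
      p x = (th * xs / x) * ((1 - p x) / (1 - th)) ^ ((r - mu) / (r + lam)) :=
  stmt_6_general r mu lam hmu hr hlam a xs th ha hax p hpr hode hpx
end

section
/- Let 0 < a < x* and θ* ∈ (0,1). Suppose p : [a,x*] → (0,1) satisfies the implicit relation p(x) = (θ*·x*/x) · ( (1 − p(x))/(1 − θ*) )^{(r−μ)/(r+λ)} for all x ∈ [a,x*]. Then for every x ∈ [a,x*]: p(x) ≥ (θ*x*/x)^{(r+λ)/(r−μ)} / ( 1 + (θ*x*/x)^{(r+λ)/(r−μ)} ). -/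
open Set Filter

theorem stmt_7
    (r mu lam : ℝ) (hmu : 0 ≤ mu) (hr : mu < r) (hlam : 0 ≤ lam)
    (a xs th : ℝ) (ha : 0 < a) (hax : a < xs) (hth : th ∈ Set.Ioo (0:ℝ) 1)
    (p : ℝ → ℝ)
    (hpr : ∀ x ∈ Set.Icc a xs, p x ∈ Set.Ioo (0:ℝ) 1)
    (hrel : ∀ x ∈ Set.Icc a xs,
      p x = (th * xs / x) * ((1 - p x) / (1 - th)) ^ ((r - mu) / (r + lam))) :
    ∀ x ∈ Set.Icc a xs,
      (th * xs / x) ^ ((r + lam) / (r - mu)) / (1 + (th * xs / x) ^ ((r + lam) / (r - mu)))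
        ≤ p x := by
  intro x hx
  obtain ⟨hx1, hx2⟩ := hx
  have hx0 : 0 < x := lt_of_lt_of_le ha hx1
  obtain ⟨hth0, hth1⟩ := hth
  obtain ⟨hp0, hp1⟩ := hpr x ⟨hx1, hx2⟩
  have hrm : 0 < r - mu := by linarith
  have hrl : 0 < r + lam := by linarith
  set β : ℝ := (r - mu) / (r + lam) with hβdef
  have hβ0 : 0 < β := div_pos hrm hrl
  have hβ1 : β ≤ 1 := by rw [div_le_one hrl]; linarith
  have hxs : 0 < xs := lt_trans ha hax
  have hc0 : 0 < th * xs / x := by positivity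
  have hinv : (r + lam) / (r - mu) = 1 / β := by
    rw [hβdef, one_div_div]
  have hq0 : 0 < (1 - p x) / (1 - th) := div_pos (by linarith) (by linarith)
  have hrel' := hrel x ⟨hx1, hx2⟩
  have hqb : 0 < ((1 - p x) / (1 - th)) ^ β := Real.rpow_pos_of_pos hq0 β
  have hc_eq : th * xs / x = p x / ((1 - p x) / (1 - th)) ^ β := by
    rw [eq_div_iff hqb.ne']
    exact hrel'.symm
  have hKeq : (th * xs / x) ^ ((r + lam) / (r - mu))
      = p x ^ (1 / β) / ((1 - p x) / (1 - th)) := by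
    rw [hinv, hc_eq, Real.div_rpow hp0.le hqb.le, ← Real.rpow_mul hq0.le,
      mul_one_div_cancel hβ0.ne', Real.rpow_one]
  have hple : p x ^ (1 / β) ≤ p x := by
    calc p x ^ (1 / β) ≤ p x ^ (1 : ℝ) := by
          apply Real.rpow_le_rpow_of_exponent_ge hp0 hp1.le
          rw [le_div_iff₀ hβ0]; linarith
      _ = p x := Real.rpow_one _
  have hKle : (th * xs / x) ^ ((r + lam) / (r - mu)) ≤ p x / (1 - p x) := by
    rw [hKeq, div_div_eq_mul_div, div_le_div_iff₀ (by linarith) (by linarith)]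
    have hnn : 0 ≤ p x ^ (1 / β) := (Real.rpow_pos_of_pos hp0 _).le
    have h1 : p x ^ (1 / β) * (1 - th) ≤ p x := by nlinarith
    exact mul_le_mul_of_nonneg_right h1 (by linarith)
  set K := (th * xs / x) ^ ((r + lam) / (r - mu)) with hKdef
  have hK0 : 0 < K := Real.rpow_pos_of_pos hc0 _
  rw [div_le_iff₀ (by linarith)]
  rw [le_div_iff₀ (by linarith)] at hKle
  nlinarith
end

section
/- Let 0 < a < x*, B > 0 and θ* ∈ (0,1). Suppose V : [a,x*] → ℝ and p : [a,x*] → (0,1) are continuously differentiable, satisfy V'(x) = r·p(x)·V(x) / ( ((λ+r) − (λ+μ)p(x))·x ) and p'(x) = (λ+r)·p(x)(p(x)−1) / ( ((λ+r) − (λ+μ)p(x))·x ) for all x ∈ [a,x*], with V(x*) = B and p(x*) = θ*. Then for every x ∈ [a,x*]: V(x) = B·( (1 − p(x))/(1 − θ*) )^{r/(r+λ)}, and equivalently V(x) = B·( p(x)·x/(θ*·x*) )^{r/(r−μ)}. -/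
/-!
Both identities are instances of one principle: if `V' u = c V u'` with `u > 0`, then
`V u ^ (-c)` has derivative `u ^ (-c - 1) (V' u - c V u') = 0`, so it is constant and
`V x = V x* (u x / u x*) ^ c`. The ODE system gives this relation for `u = 1 - p`,
`c = r / (r + λ)`, and, since `(p x)' = (r - μ) p² / ((λ + r) - (λ + μ) p)`, for `u = p x`,
`c = r / (r - μ)`.
-/

open Set

theorem hasDerivAt_mul_rpow_neg_eq_zero {V u : ℝ → ℝ} {V' u' c x : ℝ} (hu : 0 < u x)
    (hV : HasDerivAt V V' x) (hu' : HasDerivAt u u' x) (hrel : V' * u x = c * V x * u') :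
    HasDerivAt (fun y => V y * u y ^ (-c)) 0 x := by
  refine (hV.mul (hu'.rpow_const (p := -c) (Or.inl hu.ne'))).congr_deriv ?_
  rw [Real.rpow_sub hu, Real.rpow_one]
  field_simp
  linear_combination (u x ^ (-c)) * hrel

theorem eq_mul_div_rpow_of_hasDerivAt {V u V' u' : ℝ → ℝ} {a b c : ℝ}
    (hu : ∀ x ∈ Icc a b, 0 < u x)
    (hV : ∀ x ∈ Icc a b, HasDerivAt V (V' x) x)
    (hu' : ∀ x ∈ Icc a b, HasDerivAt u (u' x) x)
    (hrel : ∀ x ∈ Icc a b, V' x * u x = c * V x * u' x) :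
    ∀ x ∈ Icc a b, V x = V b * (u x / u b) ^ c := by
  intro x hx
  set H := fun y => V y * u y ^ (-c)
  have hH : ∀ y ∈ Icc a b, HasDerivAt H 0 y := fun y hy =>
    hasDerivAt_mul_rpow_neg_eq_zero (hu y hy) (hV y hy) (hu' y hy) (hrel y hy)
  have hconst : ∀ y ∈ Icc a b, H y = H a :=
    constant_of_has_deriv_right_zero (fun y hy => (hH y hy).continuousAt.continuousWithinAt)
      (fun y hy => (hH y (Ico_subset_Icc_self hy)).hasDerivWithinAt)
  have hb : b ∈ Icc a b := right_mem_Icc.mpr (hx.1.trans hx.2)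
  have hHxb : V x * u x ^ (-c) = V b * u b ^ (-c) := (hconst x hx).trans (hconst b hb).symm
  have hux := hu x hx
  have hub := hu b hb
  rw [Real.rpow_neg hux.le, Real.rpow_neg hub.le] at hHxb
  rw [Real.div_rpow hux.le hub.le]
  have : u x ^ c ≠ 0 := (Real.rpow_pos_of_pos hux c).ne'
  have : u b ^ c ≠ 0 := (Real.rpow_pos_of_pos hub c).ne'
  field_simp at hHxb ⊢
  linear_combination hHxb

theorem stmt_9_general
    (r mu lam : ℝ) (hmu : 0 ≤ mu) (hr : mu < r) (hlam : 0 ≤ lam)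
    (a xs B th : ℝ) (ha : 0 < a)
    (V p : ℝ → ℝ)
    (hpr : ∀ x ∈ Set.Icc a xs, p x ∈ Set.Ioo (0:ℝ) 1)
    (hodeV : ∀ x ∈ Set.Icc a xs,
      HasDerivAt V (r * p x * V x / (((lam + r) - (lam + mu) * p x) * x)) x)
    (hodep : ∀ x ∈ Set.Icc a xs,
      HasDerivAt p ((lam + r) * p x * (p x - 1) / (((lam + r) - (lam + mu) * p x) * x)) x)
    (hVx : V xs = B) (hpx : p xs = th) :
    ∀ x ∈ Set.Icc a xs,
      V x = B * ((1 - p x) / (1 - th)) ^ (r / (r + lam)) ∧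
      V x = B * (p x * x / (th * xs)) ^ (r / (r - mu)) := by
  have hxpos : ∀ x ∈ Icc a xs, 0 < x := fun x hx => ha.trans_le hx.1
  have hD : ∀ x ∈ Icc a xs, (lam + r) - (lam + mu) * p x ≠ 0 := fun x hx => by
    obtain ⟨h0, h1⟩ := hpr x hx
    nlinarith
  have hrl : r + lam ≠ 0 := by linarith
  have hrm : r - mu ≠ 0 := by linarith
  have hpx_deriv : ∀ x ∈ Icc a xs, HasDerivAt (fun y => p y * y)
      ((r - mu) * p x ^ 2 / ((lam + r) - (lam + mu) * p x)) x := fun x hx =>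
    ((hodep x hx).mul (hasDerivAt_id' x)).congr_deriv <| by
      have := (hxpos x hx).ne'
      rw [div_mul_eq_mul_div, mul_div_mul_right _ _ this, div_add' _ _ _ (hD x hx)]
      ring
  have hV_one_sub := eq_mul_div_rpow_of_hasDerivAt (c := r / (r + lam))
    (fun x hx => sub_pos.mpr (hpr x hx).2) hodeV
    (fun x hx => (hodep x hx).const_sub 1) fun x hx => by
      have := hD x hx; have := (hxpos x hx).ne'
      field_simp; ring
  have hV_px := eq_mul_div_rpow_of_hasDerivAt (c := r / (r - mu))
    (fun x hx => mul_pos (hpr x hx).1 (hxpos x hx)) hodeV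
    hpx_deriv fun x hx => by
      have := hD x hx; have := (hxpos x hx).ne'
      field_simp
  intro x hx
  rw [← hVx, ← hpx]
  exact ⟨hV_one_sub x hx, hV_px x hx⟩

theorem stmt_9
    (r mu lam : ℝ) (hmu : 0 ≤ mu) (hr : mu < r) (hlam : 0 ≤ lam)
    (a xs B th : ℝ) (ha : 0 < a) (hax : a < xs) (hB : 0 < B) (hth : th ∈ Set.Ioo (0:ℝ) 1)
    (V p : ℝ → ℝ)
    (hpr : ∀ x ∈ Set.Icc a xs, p x ∈ Set.Ioo (0:ℝ) 1)
    (hodeV : ∀ x ∈ Set.Icc a xs,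
      HasDerivAt V (r * p x * V x / (((lam + r) - (lam + mu) * p x) * x)) x)
    (hodep : ∀ x ∈ Set.Icc a xs,
      HasDerivAt p ((lam + r) * p x * (p x - 1) / (((lam + r) - (lam + mu) * p x) * x)) x)
    (hVx : V xs = B) (hpx : p xs = th) :
    ∀ x ∈ Set.Icc a xs,
      V x = B * ((1 - p x) / (1 - th)) ^ (r / (r + lam)) ∧
      V x = B * (p x * x / (th * xs)) ^ (r / (r - mu)) :=
  stmt_9_general r mu lam hmu hr hlam a xs B th ha V p hpr hodeV hodep hVx hpx
end

section
/- Let θ : (0,∞) → (0,1) satisfy lim_{s→∞} s·θ(s) = +∞, and fix x > 0 and B > 0. Suppose that for each x* > x, V(·,x*) : [x,x*] → ℝ and p(·,x*) : [x,x*] → (0,1) are continuously differentiable solutions of the system V_x = r·p·V / ( ((λ+r) − (λ+μ)p)·s ) and p_x = (λ+r)·p(p−1) / ( ((λ+r) − (λ+μ)p)·s ) with terminal conditions V(x*,x*) = B and p(x*,x*) = θ(x*). Then lim_{x*→∞} V(x,x*) = 0. -/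
/-!
The system has two first integrals, `V (1 - p) ^ (-α)` and `s p (1 - p) ^ (-β)` with
`α = r / (λ + r)` and `β = (r - μ) / (λ + r)`. Comparing them at `x` and at `x*`, and writing
`t = (1 - p(x, x*)) / (1 - θ(x*))`, gives `V(x, x*) = B t ^ α` and
`t ^ β = x p(x, x*) / (x* θ(x*)) ≤ x / (x* θ(x*))`, which tends to `0` as `x* → ∞`.
-/

open Set Filter

theorem hasDerivAt_mul_rpow_neg_of_logDeriv {f w : ℝ → ℝ} {f' w' c s : ℝ}
    (hf : HasDerivAt f f' s) (hw : HasDerivAt w w' s) (hw0 : 0 < w s)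
    (h : f' * w s = c * f s * w') :
    HasDerivAt (fun t => f t * w t ^ (-c)) 0 s := by
  have hpow := (Real.hasDerivAt_rpow_const (p := -c) (Or.inl hw0.ne')).comp s hw
  refine (hf.mul hpow).congr_deriv ?_
  simp only [Function.comp_apply]
  rw [Real.rpow_sub hw0, Real.rpow_one]
  field_simp
  linear_combination (w s ^ (-c)) * h

theorem eq_mul_div_rpow_of_logDeriv {f w f' w' : ℝ → ℝ} {a b c : ℝ} (hab : a ≤ b)
    (hf : ∀ s ∈ Icc a b, HasDerivAt f (f' s) s) (hw : ∀ s ∈ Icc a b, HasDerivAt w (w' s) s)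
    (hw0 : ∀ s ∈ Icc a b, 0 < w s) (h : ∀ s ∈ Icc a b, f' s * w s = c * f s * w' s) :
    f a = f b * (w a / w b) ^ c := by
  have hg (s) (hs : s ∈ Icc a b) := hasDerivAt_mul_rpow_neg_of_logDeriv (hf s hs) (hw s hs)
    (hw0 s hs) (h s hs)
  have hconst := constant_of_has_deriv_right_zero
    (fun s hs => (hg s hs).continuousAt.continuousWithinAt)
    (fun s hs => (hg s (Ico_subset_Icc_self hs)).hasDerivWithinAt) b ⟨hab, le_rfl⟩
  have hwa := hw0 a ⟨le_rfl, hab⟩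
  have hwb := hw0 b ⟨hab, le_rfl⟩
  rw [Real.rpow_neg hwa.le, Real.rpow_neg hwb.le] at hconst
  rw [Real.div_rpow hwa.le hwb.le]
  have hwac := Real.rpow_pos_of_pos hwa c
  have hwbc := Real.rpow_pos_of_pos hwb c
  field_simp at hconst ⊢
  linarith

theorem tendsto_rpow_nhds_zero_of_rpow_le {ι : Type*} {l : Filter ι} {t u : ι → ℝ} {α β : ℝ}
    (hα : 0 < α) (hβ : 0 < β) (ht : ∀ᶠ i in l, 0 ≤ t i ∧ t i ^ β ≤ u i)
    (hu : Tendsto u l (nhds 0)) : Tendsto (fun i => t i ^ α) l (nhds 0) := by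
  have htβ : Tendsto (fun i => t i ^ β) l (nhds 0) :=
    tendsto_of_tendsto_of_tendsto_of_le_of_le' tendsto_const_nhds hu
      (ht.mono fun i hi => Real.rpow_nonneg hi.1 β) (ht.mono fun i hi => hi.2)
  have hcont : Tendsto (fun y : ℝ => y ^ (α / β)) (nhds 0) (nhds 0) := by
    simpa [Real.zero_rpow (div_pos hα hβ).ne'] using
      (Real.continuousAt_rpow_const 0 (α / β) (Or.inr (div_pos hα hβ).le)).tendsto
  refine (hcont.comp htβ).congr' (ht.mono fun i hi => ?_)
  simp only [Function.comp, ← Real.rpow_mul hi.1, mul_div_cancel₀ α hβ.ne']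

section ZeroRepayment

variable {r mu lam a b : ℝ} {V p : ℝ → ℝ}

theorem zeroRepayment_value_eq (hk : lam + r ≠ 0) (hab : a ≤ b) (hp : ∀ s ∈ Icc a b, p s < 1)
    (hV : ∀ s ∈ Icc a b,
      HasDerivAt V (r * p s * V s / (((lam + r) - (lam + mu) * p s) * s)) s)
    (hpd : ∀ s ∈ Icc a b,
      HasDerivAt p ((lam + r) * p s * (p s - 1) / (((lam + r) - (lam + mu) * p s) * s)) s) :
    V a = V b * ((1 - p a) / (1 - p b)) ^ (r / (lam + r)) :=
  eq_mul_div_rpow_of_logDeriv hab hV (fun s hs => (hpd s hs).const_sub 1)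
    (fun s hs => sub_pos.2 (hp s hs)) fun s _ => by field_simp; ring

theorem zeroRepayment_rpow_le (hk : 0 < lam + r) (hr : mu < r) (ha : 0 < a) (hab : a ≤ b)
    (hp : ∀ s ∈ Icc a b, p s ∈ Ioo 0 1)
    (hpd : ∀ s ∈ Icc a b,
      HasDerivAt p ((lam + r) * p s * (p s - 1) / (((lam + r) - (lam + mu) * p s) * s)) s) :
    ((1 - p a) / (1 - p b)) ^ ((r - mu) / (lam + r)) ≤ a / (b * p b) := by
  have hinv : a * p a = b * p b * ((1 - p a) / (1 - p b)) ^ ((r - mu) / (lam + r)) := by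
    refine eq_mul_div_rpow_of_logDeriv (f := fun s => s * p s) hab
      (fun s hs => (hasDerivAt_id' s).mul (hpd s hs)) (fun s hs => (hpd s hs).const_sub 1)
      (fun s hs => sub_pos.2 (hp s hs).2) fun s hs => ?_
    obtain ⟨hp0, hp1⟩ := hp s hs
    have hs0 : s ≠ 0 := (ha.trans_le hs.1).ne'
    -- positive, as it equals `(lam + r) * (1 - p s) + (r - mu) * p s`
    have hD : (lam + r) - (lam + mu) * p s ≠ 0 := by nlinarith
    generalize hDdef : (lam + r) - (lam + mu) * p s = D at hD ⊢
    field_simp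
    linear_combination (p s - 1) * hDdef
  obtain ⟨hpb0, -⟩ := hp b ⟨hab, le_rfl⟩
  obtain ⟨-, hpa1⟩ := hp a ⟨le_rfl, hab⟩
  have hb : 0 < b * p b := mul_pos (ha.trans_le hab) hpb0
  rw [le_div_iff₀ hb, mul_comm, ← hinv]
  nlinarith

end ZeroRepayment

theorem stmt_11_general
    (r mu lam : ℝ) (hmu : 0 ≤ mu) (hr : mu < r) (hlam : 0 ≤ lam)
    (th : ℝ → ℝ)
    (hthtop : Filter.Tendsto (fun s => s * th s) Filter.atTop Filter.atTop)
    (x B : ℝ) (hx : 0 < x)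
    (V p : ℝ → ℝ → ℝ)
    (hsol : ∀ xs : ℝ, x < xs →
      (∀ s ∈ Set.Icc x xs, p s xs ∈ Set.Ioo (0:ℝ) 1) ∧
      (∀ s ∈ Set.Icc x xs,
        HasDerivAt (fun s' => V s' xs)
          (r * p s xs * V s xs / (((lam + r) - (lam + mu) * p s xs) * s)) s ∧
        HasDerivAt (fun s' => p s' xs)
          ((lam + r) * p s xs * (p s xs - 1) / (((lam + r) - (lam + mu) * p s xs) * s)) s) ∧
      V xs xs = B ∧ p xs xs = th xs) :
    Filter.Tendsto (fun xs => V x xs) Filter.atTop (nhds 0) := by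
  have hk : 0 < lam + r := by linarith
  set t := fun xs => (1 - p x xs) / (1 - p xs xs)
  have hbound : ∀ᶠ xs in atTop, V x xs = B * t xs ^ (r / (lam + r)) ∧
      0 ≤ t xs ∧ t xs ^ ((r - mu) / (lam + r)) ≤ x / (xs * th xs) := by
    filter_upwards [eventually_gt_atTop x] with xs hxs
    obtain ⟨hp, hderiv, hVB, hpθ⟩ := hsol xs hxs
    refine ⟨?_, div_nonneg (sub_pos.2 (hp x ⟨le_rfl, hxs.le⟩).2).le
      (sub_pos.2 (hp xs ⟨hxs.le, le_rfl⟩).2).le, ?_⟩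
    · rw [← hVB]
      exact zeroRepayment_value_eq hk.ne' hxs.le (fun s hs => (hp s hs).2)
        (fun s hs => (hderiv s hs).1) fun s hs => (hderiv s hs).2
    · rw [← hpθ]
      exact zeroRepayment_rpow_le hk hr hx hxs.le hp fun s hs => (hderiv s hs).2
  have hu : Tendsto (fun xs => x / (xs * th xs)) atTop (nhds 0) := by
    simpa only [div_eq_mul_inv, Pi.inv_apply, mul_zero] using hthtop.inv_tendsto_atTop.const_mul x
  have htα := tendsto_rpow_nhds_zero_of_rpow_le (α := r / (lam + r)) (div_pos (by linarith) hk)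
    (div_pos (sub_pos.2 hr) hk) (hbound.mono fun _ h => h.2) hu
  simpa only [mul_zero] using (htα.const_mul B).congr' (hbound.mono fun _ h => h.1.symm)

theorem stmt_11
    (r mu lam : ℝ) (hmu : 0 ≤ mu) (hr : mu < r) (hlam : 0 ≤ lam)
    (th : ℝ → ℝ) (hthr : ∀ s : ℝ, 0 < s → th s ∈ Set.Ioo (0:ℝ) 1)
    (hthtop : Filter.Tendsto (fun s => s * th s) Filter.atTop Filter.atTop)
    (x B : ℝ) (hx : 0 < x) (hB : 0 < B)
    (V p : ℝ → ℝ → ℝ)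
    (hsol : ∀ xs : ℝ, x < xs →
      (∀ s ∈ Set.Icc x xs, p s xs ∈ Set.Ioo (0:ℝ) 1) ∧
      (∀ s ∈ Set.Icc x xs,
        HasDerivAt (fun s' => V s' xs)
          (r * p s xs * V s xs / (((lam + r) - (lam + mu) * p s xs) * s)) s ∧
        HasDerivAt (fun s' => p s' xs)
          ((lam + r) * p s xs * (p s xs - 1) / (((lam + r) - (lam + mu) * p s xs) * s)) s) ∧
      V xs xs = B ∧ p xs xs = th xs) :
    Filter.Tendsto (fun xs => V x xs) Filter.atTop (nhds 0) :=
  stmt_11_general r mu lam hmu hr hlam th hthtop x B hx V p hsol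
end

section
/- Fix x > 0 and B > 0. Let θ : (0,∞) → (0,1) be differentiable with θ'(s) ≤ 0 and θ'(s)/θ(s) + 1/s ≥ 0 for all s > 0. Let q : (x,∞) → (0,1) be differentiable and satisfy, for every x* > x, the implicit relation q(x*) = (θ(x*)·x*/x)·( (1 − q(x*))/(1 − θ(x*)) )^{(r−μ)/(r+λ)}, and define Y(x*) = B·( (1 − q(x*))/(1 − θ(x*)) )^{r/(r+λ)}. Then Y'(x*) ≤ 0 for all x* > x; consequently Y is non-increasing and inf_{x* > x} Y(x*) = lim_{x*→∞} Y(x*). -/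
open Set Filter

theorem stmt_13
    (r mu lam : ℝ) (hmu : 0 ≤ mu) (hr : mu < r) (hlam : 0 ≤ lam)
    (x B : ℝ) (hx : 0 < x) (hB : 0 < B)
    (th th' : ℝ → ℝ)
    (hthd : ∀ s : ℝ, 0 < s → HasDerivAt th (th' s) s)
    (hthr : ∀ s : ℝ, 0 < s → th s ∈ Set.Ioo (0:ℝ) 1)
    (hth'le : ∀ s : ℝ, 0 < s → th' s ≤ 0)
    (hcond : ∀ s : ℝ, 0 < s → 0 ≤ th' s / th s + 1 / s)
    (q q' : ℝ → ℝ)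
    (hqd : ∀ xs : ℝ, x < xs → HasDerivAt q (q' xs) xs)
    (hqr : ∀ xs : ℝ, x < xs → q xs ∈ Set.Ioo (0:ℝ) 1)
    (hrel : ∀ xs : ℝ, x < xs →
      q xs = (th xs * xs / x) * ((1 - q xs) / (1 - th xs)) ^ ((r - mu) / (r + lam))) :
    (∀ xs : ℝ, x < xs →
      deriv (fun s => B * ((1 - q s) / (1 - th s)) ^ (r / (r + lam))) xs ≤ 0) ∧
    AntitoneOn (fun s => B * ((1 - q s) / (1 - th s)) ^ (r / (r + lam))) (Set.Ioi x) ∧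
    Filter.Tendsto (fun s => B * ((1 - q s) / (1 - th s)) ^ (r / (r + lam))) Filter.atTop
      (nhds (⨅ s : Set.Ioi x, B * ((1 - q s.1) / (1 - th s.1)) ^ (r / (r + lam)))) := by
  have hrl : (0:ℝ) < r + lam := by linarith
  set α : ℝ := (r - mu) / (r + lam) with hαdef
  set γ : ℝ := r / (r + lam) with hγdef
  have hα0 : 0 < α := div_pos (by linarith) hrl
  have hγ0 : 0 < γ := div_pos (by linarith) hrl
  set g : ℝ → ℝ := fun s => (1 - q s) / (1 - th s) with hgdef
  set Y : ℝ → ℝ := fun s => B * g s ^ γ with hYdef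
  -- key derivative facts
  have key : ∀ xs : ℝ, x < xs → ∃ d ≤ 0, HasDerivAt Y d xs := by
    intro xs hxs
    have hs0 : 0 < xs := hx.trans hxs
    obtain ⟨hq0, hq1⟩ := hqr xs hxs
    obtain ⟨hth0, hth1⟩ := hthr xs hs0
    have h1q : 0 < 1 - q xs := by linarith
    have h1th : 0 < 1 - th xs := by linarith
    have hg0 : 0 < g xs := div_pos h1q h1th
    -- derivative of g
    set G : ℝ := ((-(q' xs)) * (1 - th xs) - (1 - q xs) * (-(th' xs))) / (1 - th xs) ^ 2
      with hGdef
    have hgd : HasDerivAt g G xs := by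
      have h1 : HasDerivAt (fun s => 1 - q s) (-(q' xs)) xs := (hqd xs hxs).const_sub 1
      have h2 : HasDerivAt (fun s => 1 - th s) (-(th' xs)) xs := (hthd xs hs0).const_sub 1
      exact h1.div h2 h1th.ne'
    -- derivative of f
    set f : ℝ → ℝ := fun s => th s * s / x with hfdef
    have hfd : HasDerivAt f ((th' xs * xs + th xs * 1) / x) xs :=
      ((hthd xs hs0).mul (hasDerivAt_id xs)).div_const x
    have hf0 : 0 < f xs := div_pos (mul_pos hth0 hs0) hx
    -- f' ≥ 0
    have hf'0 : 0 ≤ th' xs * xs + th xs := by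
      have hc := hcond xs hs0
      have h2 : th' xs * xs + th xs = (th' xs / th xs + 1 / xs) * (th xs * xs) := by
        field_simp
      rw [h2]
      exact mul_nonneg hc (mul_pos hth0 hs0).le
    -- the implicit relation, differentiated
    have hRd : HasDerivAt (fun s => f s * g s ^ α)
        ((th' xs * xs + th xs * 1) / x * g xs ^ α + f xs * (G * α * g xs ^ (α - 1))) xs :=
      hfd.mul (hgd.rpow_const (Or.inl hg0.ne'))
    have hqd2 : HasDerivAt q
        ((th' xs * xs + th xs * 1) / x * g xs ^ α + f xs * (G * α * g xs ^ (α - 1))) xs := by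
      apply hRd.congr_of_eventuallyEq
      filter_upwards [isOpen_Ioi.mem_nhds hxs] with s hs
      exact hrel s hs
    have hEq : q' xs =
        (th' xs * xs + th xs * 1) / x * g xs ^ α + f xs * (G * α * g xs ^ (α - 1)) :=
      (hqd xs hxs).unique hqd2
    -- show G ≤ 0
    have hGC : G * ((1 - th xs) ^ 2 + (1 - th xs) * (f xs * α * g xs ^ (α - 1)))
        = (1 - q xs) * th' xs - (1 - th xs) * ((th' xs * xs + th xs * 1) / x * g xs ^ α) := by
      have hG2 : G * (1 - th xs) ^ 2 = (-(q' xs)) * (1 - th xs) - (1 - q xs) * (-(th' xs)) := by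
        rw [hGdef]; field_simp
      have := hEq
      nlinarith [hG2, hEq]
    have hRHS : (1 - q xs) * th' xs - (1 - th xs) * ((th' xs * xs + th xs * 1) / x * g xs ^ α)
        ≤ 0 := by
      have h1 : (1 - q xs) * th' xs ≤ 0 :=
        mul_nonpos_of_nonneg_of_nonpos h1q.le (hth'le xs hs0)
      have h2 : 0 ≤ (1 - th xs) * ((th' xs * xs + th xs * 1) / x * g xs ^ α) := by
        apply mul_nonneg h1th.le
        apply mul_nonneg (div_nonneg (by linarith) hx.le)
        exact (Real.rpow_pos_of_pos hg0 α).le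
      linarith
    have hC0 : 0 < (1 - th xs) ^ 2 + (1 - th xs) * (f xs * α * g xs ^ (α - 1)) := by
      have : 0 < (1 - th xs) * (f xs * α * g xs ^ (α - 1)) :=
        mul_pos h1th (mul_pos (mul_pos hf0 hα0) (Real.rpow_pos_of_pos hg0 _))
      positivity
    have hG0 : G ≤ 0 := by
      by_contra h
      push_neg at h
      nlinarith [mul_pos h hC0]
    -- derivative of Y
    refine ⟨B * (G * γ * g xs ^ (γ - 1)), ?_, ?_⟩
    · have : G * γ * g xs ^ (γ - 1) ≤ 0 := by
        apply mul_nonpos_of_nonpos_of_nonneg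
        · exact mul_nonpos_of_nonpos_of_nonneg hG0 hγ0.le
        · exact (Real.rpow_pos_of_pos hg0 _).le
      exact mul_nonpos_of_nonneg_of_nonpos hB.le this
    · exact (hgd.rpow_const (Or.inl hg0.ne')).const_mul B
  have hderiv : ∀ xs : ℝ, x < xs → deriv Y xs ≤ 0 := by
    intro xs hxs
    obtain ⟨d, hd0, hd⟩ := key xs hxs
    rw [hd.deriv]; exact hd0
  have hanti : AntitoneOn Y (Set.Ioi x) := by
    apply antitoneOn_of_deriv_nonpos (convex_Ioi x)
    · intro s hs
      obtain ⟨d, _, hd⟩ := key s hs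
      exact hd.continuousAt.continuousWithinAt
    · intro s hs
      rw [interior_Ioi] at hs
      obtain ⟨d, _, hd⟩ := key s hs
      exact hd.differentiableAt.differentiableWithinAt
    · intro s hs
      rw [interior_Ioi] at hs
      exact hderiv s hs
  refine ⟨hderiv, hanti, ?_⟩
  have hpos : ∀ s : ℝ, x < s → 0 < Y s := by
    intro s hs
    obtain ⟨hq0, hq1⟩ := hqr s hs
    obtain ⟨hth0, hth1⟩ := hthr s (hx.trans hs)
    have hg0 : 0 < g s := div_pos (by linarith) (by linarith)
    exact mul_pos hB (Real.rpow_pos_of_pos hg0 _)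
  haveI : Nonempty (Set.Ioi x) := nonempty_Ioi_subtype
  have hsub : Tendsto (fun s : Set.Ioi x => Y s) atTop
      (nhds (⨅ s : Set.Ioi x, Y s.1)) := by
    apply tendsto_atTop_ciInf
    · intro a b hab
      exact hanti a.2 b.2 hab
    · exact ⟨0, by rintro y ⟨s, rfl⟩; exact (hpos s s.2).le⟩
  exact tendsto_comp_val_Ioi_atTop.mp hsub
end

section
/- Let σ ≥ 0, x* > 0, B > 0 and θ* ∈ (0,1). Suppose V : (0,x*] → ℝ and p : (0,x*] → (0,1) are continuously differentiable and satisfy, for all x ∈ (0,x*]: r·V(x) = ( (λ+r)/p(x) + σ² )·x·V'(x) and (r+λ)·(p(x) − 1) = ( (λ+r)/p(x) + σ² )·x·p'(x), with V(x*) = B and p(x*) = θ*. Then for every x ∈ (0,x*]: p(x) = (θ*·x*/x)·( (1 − p(x))/(1 − θ*) )^{(σ²+λ+r)/(λ+r)} and V(x) = B·( (1 − p(x))/(1 − θ*) )^{r/(r+λ)}; moreover p(x) → 1 and V(x) → 0 as x → 0⁺. -/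
/-!
With `α = (σ² + λ + r)/(λ + r)` and `β = r/(r + λ)`, the two ODEs say exactly that
`p x · x · (1 - p x)^(-α)` and `V x · (1 - p x)^(-β)` have zero derivative, so both are constant
on `(0, x*]`; evaluating at `x*` gives the closed forms. As `p < 1`, the first one gives
`((1 - p x)/(1 - θ*))^α ≤ x/(θ* x*)`, hence `p x → 1`, and then
`V x = B ((1 - p x)/(1 - θ*))^β → 0`.
-/

open Set Filter Topology

theorem eq_of_hasDerivAt_zero_on_Ioc {f : ℝ → ℝ} {a b : ℝ}
    (hf : ∀ x ∈ Ioc a b, HasDerivAt f 0 x) : ∀ x ∈ Ioc a b, f x = f b := by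
  intro x hx
  have hsub : Icc x b ⊆ Ioc a b := fun y hy => ⟨hx.1.trans_le hy.1, hy.2⟩
  exact (constant_of_has_deriv_right_zero
    (fun y hy => (hf y (hsub hy)).continuousAt.continuousWithinAt)
    (fun y hy => (hf y (hsub (Ico_subset_Icc_self hy))).hasDerivWithinAt) b ⟨hx.2, le_rfl⟩).symm

theorem hasDerivAt_mul_rpow_neg_eq_zero_s15 {f g : ℝ → ℝ} {f' g' γ x : ℝ}
    (hf : HasDerivAt f f' x) (hg : HasDerivAt g g' x) (hgx : 0 < g x)
    (h : f' * g x = γ * f x * g') : HasDerivAt (fun y => f y * g y ^ (-γ)) 0 x := by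
  have hgγ : HasDerivAt (fun y => g y ^ (-γ)) (g' * -γ * g x ^ (-γ - 1)) x :=
    hg.rpow_const (Or.inl hgx.ne')
  refine (hf.mul hgγ).congr_deriv ?_
  have hsplit : g x ^ (-γ) = g x ^ (-γ - 1) * g x := by
    rw [← Real.rpow_add_one hgx.ne', sub_add_cancel]
  rw [hsplit]
  linear_combination g x ^ (-γ - 1) * h

theorem eq_mul_div_rpow_of_mul_rpow_neg_eq {A B u w γ : ℝ} (hu : 0 < u) (hw : 0 < w)
    (h : A * u ^ (-γ) = B * w ^ (-γ)) : A = B * (u / w) ^ γ := by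
  have hu' := Real.rpow_pos_of_pos hu γ
  have hw' := Real.rpow_pos_of_pos hw γ
  rw [Real.rpow_neg hu.le, Real.rpow_neg hw.le] at h
  rw [Real.div_rpow hu.le hw.le]
  field_simp at h ⊢
  linear_combination h

theorem tendsto_nhds_zero_of_rpow {ι : Type*} {l : Filter ι} {w : ι → ℝ} {γ : ℝ} (hγ : 0 < γ)
    (hw : ∀ᶠ i in l, 0 ≤ w i) (h : Tendsto (fun i => w i ^ γ) l (𝓝 0)) :
    Tendsto w l (𝓝 0) := by
  have hroot := h.rpow_const (p := γ⁻¹) (Or.inr (inv_nonneg.2 hγ.le))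
  rw [Real.zero_rpow (inv_ne_zero hγ.ne')] at hroot
  refine hroot.congr' ?_
  filter_upwards [hw] with i hi
  rw [← Real.rpow_mul hi, mul_inv_cancel₀ hγ.ne', Real.rpow_one]

theorem hasDerivAt_price_first_integral {q : ℝ → ℝ} {q' a s x : ℝ} (hq : HasDerivAt q q' x)
    (hqx : q x ∈ Ioo 0 1) (ha : a ≠ 0) (hode : a * (q x - 1) = (a / q x + s) * x * q') :
    HasDerivAt (fun y => q y * y * (1 - q y) ^ (-((s + a) / a))) 0 x := by
  have hq0 : q x ≠ 0 := hqx.1.ne'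
  refine hasDerivAt_mul_rpow_neg_eq_zero_s15 (hq.mul (hasDerivAt_id x)) ((hasDerivAt_const x 1).sub hq)
    (sub_pos.2 hqx.2) ?_
  field_simp at hode ⊢
  linear_combination -hode

theorem hasDerivAt_value_first_integral {V q : ℝ → ℝ} {V' q' a r s x : ℝ}
    (hV : HasDerivAt V V' x) (hq : HasDerivAt q q' x) (hqx : q x < 1) (ha : a ≠ 0) (hx : x ≠ 0)
    (hc : a / q x + s ≠ 0) (hodeV : r * V x = (a / q x + s) * x * V')
    (hodeq : a * (q x - 1) = (a / q x + s) * x * q') :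
    HasDerivAt (fun y => V y * (1 - q y) ^ (-(r / a))) 0 x := by
  refine hasDerivAt_mul_rpow_neg_eq_zero_s15 hV ((hasDerivAt_const x 1).sub hq) (sub_pos.2 hqx) ?_
  have hcx : (a / q x + s) * x ≠ 0 := mul_ne_zero hc hx
  field_simp
  apply mul_left_cancel₀ hcx
  linear_combination -(1 - q x) * a * hodeV - r * V x * hodeq

theorem tendsto_nhdsGT_zero_of_rpow_le_mul {w : ℝ → ℝ} {C γ : ℝ} (hγ : 0 < γ)
    (h : ∀ᶠ x in 𝓝[>] 0, 0 ≤ w x ∧ w x ^ γ ≤ C * x) : Tendsto w (𝓝[>] 0) (𝓝 0) := by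
  have hCx : Tendsto (fun x => C * x) (𝓝[>] 0) (𝓝 0) :=
    ((continuous_const_mul C).tendsto' 0 0 (mul_zero C)).mono_left nhdsWithin_le_nhds
  refine tendsto_nhds_zero_of_rpow hγ (h.mono fun x hx => hx.1) ?_
  exact tendsto_of_tendsto_of_tendsto_of_le_of_le' tendsto_const_nhds hCx
    (h.mono fun x hx => Real.rpow_nonneg hx.1 γ) (h.mono fun x hx => hx.2)

theorem stmt_15_general
    (r mu lam sig : ℝ) (hmu : 0 ≤ mu) (hr : mu < r) (hlam : 0 ≤ lam)
    (xs B th : ℝ) (hxs : 0 < xs) (hth : th ∈ Set.Ioo (0:ℝ) 1)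
    (V p V' p' : ℝ → ℝ)
    (hVd : ∀ x ∈ Set.Ioc (0:ℝ) xs, HasDerivAt V (V' x) x)
    (hpd : ∀ x ∈ Set.Ioc (0:ℝ) xs, HasDerivAt p (p' x) x)
    (hpr : ∀ x ∈ Set.Ioc (0:ℝ) xs, p x ∈ Set.Ioo (0:ℝ) 1)
    (hodeV : ∀ x ∈ Set.Ioc (0:ℝ) xs, r * V x = ((lam + r) / p x + sig ^ 2) * x * V' x)
    (hodep : ∀ x ∈ Set.Ioc (0:ℝ) xs,
      (r + lam) * (p x - 1) = ((lam + r) / p x + sig ^ 2) * x * p' x)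
    (hVx : V xs = B) (hpx : p xs = th) :
    (∀ x ∈ Set.Ioc (0:ℝ) xs,
      p x = (th * xs / x) * ((1 - p x) / (1 - th)) ^ ((sig ^ 2 + lam + r) / (lam + r)) ∧
      V x = B * ((1 - p x) / (1 - th)) ^ (r / (r + lam))) ∧
    Filter.Tendsto p (nhdsWithin 0 (Set.Ioi 0)) (nhds 1) ∧
    Filter.Tendsto V (nhdsWithin 0 (Set.Ioi 0)) (nhds 0) := by
  obtain ⟨hth0, hth1⟩ := hth
  have hr0 : 0 < r := by linarith
  have ha : 0 < lam + r := by linarith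
  rw [add_comm r lam] at hodep ⊢
  set α := (sig ^ 2 + lam + r) / (lam + r)
  have hα : 0 < α := div_pos (by linarith [sq_nonneg sig]) ha
  set w := fun x => (1 - p x) / (1 - th)
  have hprice : ∀ x ∈ Ioc (0:ℝ) xs, p x * x = th * xs * w x ^ α := by
    intro x hx
    have hconst := eq_of_hasDerivAt_zero_on_Ioc (fun y hy => hasDerivAt_price_first_integral
      (hpd y hy) (hpr y hy) ha.ne' (hodep y hy)) x hx
    rw [hpx, ← add_assoc] at hconst
    exact eq_mul_div_rpow_of_mul_rpow_neg_eq (sub_pos.2 (hpr x hx).2) (sub_pos.2 hth1) hconst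
  have hvalue : ∀ x ∈ Ioc (0:ℝ) xs, V x = B * w x ^ (r / (lam + r)) := by
    intro x hx
    have hconst := eq_of_hasDerivAt_zero_on_Ioc (fun y hy =>
      hasDerivAt_value_first_integral (hVd y hy) (hpd y hy) (hpr y hy).2 ha.ne' hy.1.ne'
        (add_pos_of_pos_of_nonneg (div_pos ha (hpr y hy).1) (sq_nonneg sig)).ne'
        (hodeV y hy) (hodep y hy)) x hx
    rw [hpx, hVx] at hconst
    exact eq_mul_div_rpow_of_mul_rpow_neg_eq (sub_pos.2 (hpr x hx).2) (sub_pos.2 hth1) hconst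
  have hw : Tendsto w (𝓝[>] 0) (𝓝 0) := by
    refine tendsto_nhdsGT_zero_of_rpow_le_mul (C := (th * xs)⁻¹) hα ?_
    filter_upwards [Ioc_mem_nhdsGT hxs] with x hx
    refine ⟨div_nonneg (sub_pos.2 (hpr x hx).2).le (sub_pos.2 hth1).le, ?_⟩
    rw [inv_mul_eq_div, le_div_iff₀ (by positivity), mul_comm, ← hprice x hx]
    exact mul_le_of_le_one_left hx.1.le (hpr x hx).2.le
  refine ⟨fun x hx => ⟨?_, hvalue x hx⟩, ?_, ?_⟩
  · rw [div_mul_eq_mul_div, eq_div_iff hx.1.ne', hprice x hx]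
  · have hlim := (hw.const_mul (1 - th)).const_sub 1
    rw [mul_zero, sub_zero] at hlim
    refine hlim.congr fun x => ?_
    simp only [w]
    field_simp [(sub_pos.2 hth1).ne']
    ring
  · have hlim := (hw.rpow_const (Or.inr (by positivity : 0 ≤ r / (lam + r)))).const_mul B
    rw [Real.zero_rpow (by positivity), mul_zero] at hlim
    refine hlim.congr' ?_
    filter_upwards [Ioc_mem_nhdsGT hxs] with x hx
    exact (hvalue x hx).symm

theorem stmt_15
    (r mu lam sig : ℝ) (hmu : 0 ≤ mu) (hr : mu < r) (hlam : 0 ≤ lam) (hsig : 0 ≤ sig)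
    (xs B th : ℝ) (hxs : 0 < xs) (hB : 0 < B) (hth : th ∈ Set.Ioo (0:ℝ) 1)
    (V p V' p' : ℝ → ℝ)
    (hVd : ∀ x ∈ Set.Ioc (0:ℝ) xs, HasDerivAt V (V' x) x)
    (hpd : ∀ x ∈ Set.Ioc (0:ℝ) xs, HasDerivAt p (p' x) x)
    (hV'c : ContinuousOn V' (Set.Ioc 0 xs)) (hp'c : ContinuousOn p' (Set.Ioc 0 xs))
    (hpr : ∀ x ∈ Set.Ioc (0:ℝ) xs, p x ∈ Set.Ioo (0:ℝ) 1)
    (hodeV : ∀ x ∈ Set.Ioc (0:ℝ) xs, r * V x = ((lam + r) / p x + sig ^ 2) * x * V' x)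
    (hodep : ∀ x ∈ Set.Ioc (0:ℝ) xs,
      (r + lam) * (p x - 1) = ((lam + r) / p x + sig ^ 2) * x * p' x)
    (hVx : V xs = B) (hpx : p xs = th) :
    (∀ x ∈ Set.Ioc (0:ℝ) xs,
      p x = (th * xs / x) * ((1 - p x) / (1 - th)) ^ ((sig ^ 2 + lam + r) / (lam + r)) ∧
      V x = B * ((1 - p x) / (1 - th)) ^ (r / (r + lam))) ∧
    Filter.Tendsto p (nhdsWithin 0 (Set.Ioi 0)) (nhds 1) ∧
    Filter.Tendsto V (nhdsWithin 0 (Set.Ioi 0)) (nhds 0) :=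
  stmt_15_general r mu lam sig hmu hr hlam xs B th hxs hth V p V' p' hVd hpd hpr hodeV hodep hVx hpx
end

section
/- Let σ ≥ 0, x* > 0, B > 0, θ* ∈ [0,1), and set x₂ = θ*·x* + 2/(r−μ); assume x₂ < x*. For x ∈ (x₂, x*) define p₂(x) = x₂/x and V₂(x) = (1 − x₂/x)·B. Then for every x ∈ (x₂, x*): (a) for every ξ ≥ 0, (r+λ)·(1 − p₂(x)) + H_ξ(x, ξ, p₂(x))·p₂'(x) + (σ²x²/2)·p₂''(x) ≤ 0; and (b) for every q ∈ (0, p₂(x)], −r·V₂(x) + H(x, V₂'(x), q) + (σ²x²/2)·V₂''(x) ≥ 0. -/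
/-!
Write `H(x, ξ, p) = M(ξ / p) + k(p) x ξ` with `M(c) = inf_{ω ∈ [0,1)} (L ω - c ω)`. As `L` is
strictly convex and blows up at `1`, the infimum is attained at a unique `ω(c) ∈ [0, 1)`, which
depends continuously on `c`, and the envelope theorem gives `M'(c) = -ω(c)`. With `p₂ = x₂ / x`
the left side of (a) collapses to `(ω(ξ / p₂) - (r - μ) x₂) / x < 0`, since
`ω < 1 < 2 ≤ (r - μ) x₂`. For (b), `L ≥ 0` gives `M(c) ≥ -c`; the remaining `1 / q` terms have a
nonnegative coefficient, so `q ≤ p₂` reduces (b) to `λ B (1 - x₂ / x) + ((r - μ) x₂ - 1) B / x ≥ 0`.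
-/

open Set Filter

/-- The partial derivative `H_ξ` of the Hamiltonian in its second argument. -/
noncomputable def Hxi (L : ℝ → ℝ) (lam r mu sig x ξ p : ℝ) : ℝ :=
  deriv (fun ξ' => Ham L lam r mu sig x ξ' p) ξ

open Topology Asymptotics

/-- Minus the convex conjugate of `L` restricted to `[0, 1)`. -/
noncomputable def negConjugate (L : ℝ → ℝ) (c : ℝ) : ℝ :=
  sInf ((fun ω => L ω - c * ω) '' Ico 0 1)

lemma Ham_eq_negConjugate (L : ℝ → ℝ) (lam r mu sig x ξ p : ℝ) :
    Ham L lam r mu sig x ξ p =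
      negConjugate L (ξ / p) + ((lam + r) / p - lam + sig ^ 2 - mu) * x * ξ :=
  rfl

lemma IsCompact.exists_add_le_of_dist_ge {X : Type*} [PseudoMetricSpace X] {K : Set X}
    (hK : IsCompact K) {f : X → ℝ} (hf : ContinuousOn f K) {a : X}
    (ha : ∀ v ∈ K, v ≠ a → f a < f v) {ε : ℝ} (hε : 0 < ε) :
    ∃ γ > 0, ∀ v ∈ K, ε ≤ dist v a → f a + γ ≤ f v := by
  set K' := K ∩ {v | ε ≤ dist v a}
  rcases K'.eq_empty_or_nonempty with hK' | hK'
  · refine ⟨1, one_pos, fun v hv hva => ?_⟩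
    exact absurd (hK'.subset ⟨hv, hva⟩) (notMem_empty v)
  have hK'c : IsCompact K' :=
    hK.inter_right (isClosed_le continuous_const (continuous_id.dist continuous_const))
  obtain ⟨v₀, ⟨hv₀K, hv₀a⟩, hmin⟩ := hK'c.exists_isMinOn hK' (hf.mono inter_subset_left)
  have hv₀ne : v₀ ≠ a := fun h => by simp [h] at hv₀a; linarith
  exact ⟨f v₀ - f a, sub_pos.2 (ha v₀ hv₀K hv₀ne), fun v hv hva => by
    linarith [show f v₀ ≤ f v from hmin ⟨hv, hva⟩]⟩

section negConjugate

variable {L : ℝ → ℝ}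

lemma IsMinOn.negConjugate_eq {c ω₀ : ℝ} (hmin : IsMinOn (fun ω => L ω - c * ω) (Ico 0 1) ω₀)
    (hω₀ : ω₀ ∈ Ico (0 : ℝ) 1) : negConjugate L c = L ω₀ - c * ω₀ :=
  IsLeast.csInf_eq ⟨mem_image_of_mem _ hω₀, forall_mem_image.2 fun _ hω => hmin hω⟩

lemma neg_le_negConjugate (hL : ∀ ω ∈ Ico (0 : ℝ) 1, 0 ≤ L ω) {c : ℝ} (hc : 0 ≤ c) :
    -c ≤ negConjugate L c :=
  le_csInf ((nonempty_Ico.2 one_pos).image _) <| forall_mem_image.2 fun ω hω => by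
    nlinarith [hL ω hω, hω.2]

lemma strictConvexOn_sub_mul (hconv : StrictConvexOn ℝ (Ico 0 1) L) (c : ℝ) :
    StrictConvexOn ℝ (Ico 0 1) (fun ω => L ω - c * ω) :=
  hconv.sub_concaveOn ((LinearMap.mulLeft ℝ c).concaveOn (convex_Ico 0 1))

variable (hcont : ContinuousOn L (Ico 0 1)) (hL0 : L 0 = 0)
  (hLtop : Tendsto L (𝓝[<] 1) atTop)
include hcont hL0 hLtop

/-- Beyond `t` the cost `L ω - c ω ≥ 1` exceeds its value `0` at `ω = 0`. -/
lemma exists_isMinOn_mem_Icc (K : ℝ) :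
    ∃ t < 1, ∀ c, |c| ≤ K → ∃ ω₀ ∈ Icc 0 t, IsMinOn (fun ω => L ω - c * ω) (Ico 0 1) ω₀ := by
  obtain ⟨l, hl, hLl⟩ := mem_nhdsLT_iff_exists_Ioo_subset.1 (hLtop.eventually_ge_atTop (K + 1))
  set t := max 0 l
  have hIcc : Icc 0 t ⊆ Ico 0 1 := fun ω hω => ⟨hω.1, hω.2.trans_lt (max_lt one_pos hl)⟩
  refine ⟨t, max_lt one_pos hl, fun c hc => ?_⟩
  obtain ⟨ω₀, hω₀, hmin⟩ := isCompact_Icc.exists_isMinOn (nonempty_Icc.2 (le_max_left 0 l))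
    ((hcont.mono hIcc).sub (continuousOn_const.mul continuousOn_id))
  refine ⟨ω₀, hω₀, fun ω hω => ?_⟩
  rcases le_or_gt ω t with hωt | hωt
  · exact hmin ⟨hω.1, hωt⟩
  have h0 : L ω₀ - c * ω₀ ≤ L 0 - c * 0 := hmin ⟨le_rfl, le_max_left 0 l⟩
  have hLω : K + 1 ≤ L ω := hLl ⟨(le_max_right 0 l).trans_lt hωt, hω.2⟩
  show L ω₀ - c * ω₀ ≤ L ω - c * ω
  nlinarith [le_abs_self c, abs_nonneg c, hω.1, hω.2]

lemma exists_isMinOn (c : ℝ) :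
    ∃ ω₀ ∈ Ico (0 : ℝ) 1, IsMinOn (fun ω => L ω - c * ω) (Ico 0 1) ω₀ := by
  obtain ⟨t, ht, hmin⟩ := exists_isMinOn_mem_Icc hcont hL0 hLtop |c|
  obtain ⟨ω₀, hω₀, hω₀min⟩ := hmin c le_rfl
  exact ⟨ω₀, ⟨hω₀.1, hω₀.2.trans_lt ht⟩, hω₀min⟩

lemma tendsto_argmin (hconv : StrictConvexOn ℝ (Ico 0 1) L) {W : ℝ → ℝ}
    (hW : ∀ c, W c ∈ Ico (0 : ℝ) 1) (hWmin : ∀ c, IsMinOn (fun ω => L ω - c * ω) (Ico 0 1) (W c))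
    (c : ℝ) : Tendsto W (𝓝 c) (𝓝 (W c)) := by
  obtain ⟨t, ht, hmin⟩ := exists_isMinOn_mem_Icc hcont hL0 hLtop (|c| + 1)
  have hIcc : Icc 0 t ⊆ Ico 0 1 := fun ω hω => ⟨hω.1, hω.2.trans_lt ht⟩
  have hWt : ∀ c', |c'| ≤ |c| + 1 → W c' ∈ Icc 0 t := fun c' hc' => by
    obtain ⟨ω₀, hω₀, hω₀min⟩ := hmin c' hc'
    rwa [(strictConvexOn_sub_mul hconv c').eq_of_isMinOn (hWmin c') hω₀min (hW c') (hIcc hω₀)]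
  have hunique : ∀ v ∈ Icc 0 t, v ≠ W c → L (W c) - c * W c < L v - c * v := fun v hv hne =>
    lt_of_le_of_ne (hWmin c (hIcc hv)) fun heq => hne <|
      (strictConvexOn_sub_mul hconv c).eq_of_isMinOn
        (fun u hu => le_trans heq.symm.le (hWmin c hu)) (hWmin c) (hIcc hv) (hW c)
  -- `W c'` is an `|c' - c|`-approximate minimizer at slope `c`, and on the compact `[0, t]` the
  -- minimum at `W c` is well separated.
  refine Metric.tendsto_nhds.2 fun ε hε => ?_
  obtain ⟨γ, hγ, hsep⟩ := isCompact_Icc.exists_add_le_of_dist_ge (f := fun ω => L ω - c * ω)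
    ((hcont.mono hIcc).sub (continuousOn_const.mul continuousOn_id)) hunique hε
  filter_upwards [Metric.ball_mem_nhds c (lt_min one_pos hγ)] with c' hc'
  rw [Metric.mem_ball, Real.dist_eq, lt_min_iff] at hc'
  by_contra! hfar
  have hc'K : |c'| ≤ |c| + 1 := by linarith [abs_sub_abs_le_abs_sub c' c]
  have h1 := hsep (W c') (hWt c' hc'K) hfar
  have h2 : L (W c') - c' * W c' ≤ L (W c) - c' * W c := hWmin c' (hW c)
  have h3 : (c' - c) * (W c' - W c) ≤ |c' - c| := by
    have : |W c' - W c| ≤ 1 :=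
      abs_le.2 ⟨by linarith [(hW c').1, (hW c).2], by linarith [(hW c').2, (hW c).1]⟩
    calc (c' - c) * (W c' - W c) ≤ |c' - c| * |W c' - W c| := by
          rw [← abs_mul]; exact le_abs_self _
      _ ≤ |c' - c| := mul_le_of_le_one_right (abs_nonneg _) this
  linarith

lemma hasDerivAt_negConjugate (hconv : StrictConvexOn ℝ (Ico 0 1) L) {c ω₀ : ℝ}
    (hω₀ : ω₀ ∈ Ico (0 : ℝ) 1) (hmin : IsMinOn (fun ω => L ω - c * ω) (Ico 0 1) ω₀) :
    HasDerivAt (negConjugate L) (-ω₀) c := by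
  choose W hW hWmin using exists_isMinOn hcont hL0 hLtop
  have hWc : W c = ω₀ := (strictConvexOn_sub_mul hconv c).eq_of_isMinOn (hWmin c) hmin (hW c) hω₀
  -- Comparing with the minimizers at `c` and `c'` squeezes the remainder between
  -- `-(c' - c) (W c' - ω₀)` and `0`.
  have hbound : ∀ c', ‖negConjugate L c' - negConjugate L c - (c' - c) • -ω₀‖ ≤
      1 * ‖(W c' - ω₀) * (c' - c)‖ := fun c' => by
    have h1 : L (W c') - c' * W c' ≤ L ω₀ - c' * ω₀ := hWmin c' hω₀
    have h2 : L ω₀ - c * ω₀ ≤ L (W c') - c * W c' := hmin (hW c')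
    rw [(hWmin c').negConjugate_eq (hW c'), hmin.negConjugate_eq hω₀, smul_eq_mul, one_mul,
      Real.norm_eq_abs, Real.norm_eq_abs, abs_le]
    constructor <;>
      nlinarith [neg_abs_le ((W c' - ω₀) * (c' - c)), le_abs_self ((W c' - ω₀) * (c' - c))]
  have hsmall : (fun c' => (W c' - ω₀) * (c' - c)) =o[𝓝 c] fun c' => c' - c := by
    have hW0 : Tendsto (fun c' => W c' - ω₀) (𝓝 c) (𝓝 0) :=
      tendsto_sub_nhds_zero_iff.2 (hWc ▸ tendsto_argmin hcont hL0 hLtop hconv hW hWmin c)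
    simpa using ((isLittleO_one_iff ℝ).2 hW0).mul_isBigO (isBigO_refl (fun c' => c' - c) _)
  exact hasDerivAt_iff_isLittleO.2
    ((IsBigO.of_bound 1 (Eventually.of_forall hbound)).trans_isLittleO hsmall)

lemma Hxi_eq (hconv : StrictConvexOn ℝ (Ico 0 1) L) {lam r mu sig x ξ p ω₀ : ℝ}
    (hω₀ : ω₀ ∈ Ico (0 : ℝ) 1) (hmin : IsMinOn (fun ω => L ω - ξ / p * ω) (Ico 0 1) ω₀) :
    Hxi L lam r mu sig x ξ p = -ω₀ / p + ((lam + r) / p - lam + sig ^ 2 - mu) * x := by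
  have h := ((hasDerivAt_negConjugate hcont hL0 hLtop hconv hω₀ hmin).comp ξ
    ((hasDerivAt_id ξ).div_const p)).add
    ((hasDerivAt_id ξ).const_mul (((lam + r) / p - lam + sig ^ 2 - mu) * x))
  exact h.deriv.trans (by ring)

end negConjugate

lemma deriv_deriv_const_div (a : ℝ) {x : ℝ} (hx : x ≠ 0) :
    deriv (deriv fun y => a / y) x = 2 * a / x ^ 3 := by
  rw [show (deriv fun y => a / y) = fun y => -a / y ^ 2 from funext fun _ => deriv_const_div_id a,
    deriv_const_div (d := fun y : ℝ => y ^ 2) _ (by fun_prop) (pow_ne_zero 2 hx), deriv_pow_field]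
  field_simp
  ring

lemma deriv_one_sub_const_div_mul (a B x : ℝ) :
    deriv (fun y => (1 - a / y) * B) x = a / x ^ 2 * B := by
  simp [div_eq_mul_inv]

lemma deriv_deriv_one_sub_const_div_mul (a B : ℝ) {x : ℝ} (hx : x ≠ 0) :
    deriv (deriv fun y => (1 - a / y) * B) x = -(2 * a / x ^ 3) * B := by
  rw [funext (deriv_one_sub_const_div_mul a B), deriv_mul_const_field,
    deriv_const_div (d := fun y : ℝ => y ^ 2) _ (by fun_prop) (pow_ne_zero 2 hx), deriv_pow_field]
  field_simp
  ring

lemma hamiltonian_ineq_p₂ {L : ℝ → ℝ} (hcont : ContinuousOn L (Ico 0 1)) (hL0 : L 0 = 0)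
    (hLtop : Tendsto L (𝓝[<] 1) atTop) (hconv : StrictConvexOn ℝ (Ico 0 1) L)
    {r mu lam sig x2 x : ℝ} (hx2r : 1 ≤ (r - mu) * x2) (hx2 : 0 < x2) (hx : x2 < x) (ξ : ℝ) :
    (r + lam) * (1 - x2 / x) + Hxi L lam r mu sig x ξ (x2 / x) * deriv (fun y => x2 / y) x +
      sig ^ 2 * x ^ 2 / 2 * deriv (deriv (fun y => x2 / y)) x ≤ 0 := by
  have hx0 : 0 < x := hx2.trans hx
  obtain ⟨ω₀, hω₀, hmin⟩ := exists_isMinOn hcont hL0 hLtop (ξ / (x2 / x))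
  rw [Hxi_eq hcont hL0 hLtop hconv hω₀ hmin, deriv_const_div_id, deriv_deriv_const_div x2 hx0.ne']
  have hsimp : (r + lam) * (1 - x2 / x) +
      (-ω₀ / (x2 / x) + ((lam + r) / (x2 / x) - lam + sig ^ 2 - mu) * x) * (-x2 / x ^ 2) +
      sig ^ 2 * x ^ 2 / 2 * (2 * x2 / x ^ 3) = (ω₀ - (r - mu) * x2) / x := by
    field_simp
    ring
  rw [hsimp]
  exact div_nonpos_of_nonpos_of_nonneg (by linarith [hω₀.2]) hx0.le

lemma hamiltonian_ineq_V₂ {L : ℝ → ℝ} (hL : ∀ ω ∈ Ico (0 : ℝ) 1, 0 ≤ L ω)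
    {r mu lam sig x2 x B q : ℝ} (hmu : 0 ≤ mu) (hlam : 0 ≤ lam) (hB : 0 < B)
    (hx2r : 1 ≤ (r - mu) * x2) (hx2 : 0 < x2) (hx : x2 < x) (hq : 0 < q) (hqx : q ≤ x2 / x) :
    0 ≤ -r * ((1 - x2 / x) * B) + Ham L lam r mu sig x (deriv (fun y => (1 - x2 / y) * B) x) q +
      sig ^ 2 * x ^ 2 / 2 * deriv (deriv (fun y => (1 - x2 / y) * B)) x := by
  have hx0 : 0 < x := hx2.trans hx
  rw [deriv_one_sub_const_div_mul, deriv_deriv_one_sub_const_div_mul x2 B hx0.ne',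
    Ham_eq_negConjugate]
  set ξ := x2 / x ^ 2 * B
  have hM := neg_le_negConjugate hL (c := ξ / q) (by positivity)
  have hrmu : 0 < r - mu := pos_of_mul_pos_left (by linarith) hx2.le
  have hlin : 0 ≤ (lam + r) * x - 1 := by
    nlinarith [mul_le_mul_of_nonneg_left hx.le hrmu.le, mul_nonneg hlam hx0.le,
      mul_nonneg hmu hx0.le]
  have hpq : x / x2 ≤ 1 / q := by
    rw [div_le_div_iff₀ hx2 hq]
    rw [le_div_iff₀ hx0] at hqx
    linarith
  have hgain : x / x2 * (((lam + r) * x - 1) * ξ) ≤ 1 / q * (((lam + r) * x - 1) * ξ) :=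
    mul_le_mul_of_nonneg_right hpq (mul_nonneg hlin (by positivity))
  have hbase : 0 ≤ lam * B * (1 - x2 / x) + ((r - mu) * x2 - 1) * (B / x) :=
    add_nonneg (mul_nonneg (mul_nonneg hlam hB.le) (sub_nonneg.2 ((div_le_one hx0).2 hx.le)))
      (mul_nonneg (by linarith) (by positivity))
  have hsplit : -r * ((1 - x2 / x) * B) +
      (negConjugate L (ξ / q) + ((lam + r) / q - lam + sig ^ 2 - mu) * x * ξ) +
      sig ^ 2 * x ^ 2 / 2 * (-(2 * x2 / x ^ 3) * B) =
      (negConjugate L (ξ / q) + ξ / q) + (1 / q - x / x2) * (((lam + r) * x - 1) * ξ) +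
      (lam * B * (1 - x2 / x) + ((r - mu) * x2 - 1) * (B / x)) := by
    simp only [ξ]
    field_simp
    ring
  rw [hsplit]
  linarith

theorem stmt_17_general
    (r mu lam sig : ℝ) (hmu : 0 ≤ mu) (hr : mu < r) (hlam : 0 ≤ lam)
    (L : ℝ → ℝ)
    (hL : ContDiffOn ℝ 2 L (Set.Ico 0 1))
    (hL0 : L 0 = 0)
    (hL1 : ∀ u ∈ Set.Ico (0:ℝ) 1, 0 < deriv L u)
    (hL2 : ∀ u ∈ Set.Ico (0:ℝ) 1, 0 < deriv (deriv L) u)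
    (hLtop : Filter.Tendsto L (nhdsWithin 1 (Set.Iio 1)) Filter.atTop)
    (xs B th : ℝ) (hxs : 0 < xs) (hB : 0 < B) (hth : th ∈ Set.Ico (0:ℝ) 1)
    (x2 : ℝ) (hx2def : x2 = th * xs + 2 / (r - mu)) :
    ∀ x ∈ Set.Ioo x2 xs,
      (∀ ξ : ℝ, 0 ≤ ξ →
        (r + lam) * (1 - x2 / x) + Hxi L lam r mu sig x ξ (x2 / x) * deriv (fun y => x2 / y) x +
          sig ^ 2 * x ^ 2 / 2 * deriv (deriv (fun y => x2 / y)) x ≤ 0) ∧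
      (∀ q ∈ Set.Ioc (0:ℝ) (x2 / x),
        0 ≤ -r * ((1 - x2 / x) * B) +
          Ham L lam r mu sig x (deriv (fun y => (1 - x2 / y) * B) x) q +
          sig ^ 2 * x ^ 2 / 2 * deriv (deriv (fun y => (1 - x2 / y) * B)) x) := by
  have hcont : ContinuousOn L (Ico 0 1) := hL.continuousOn
  have hinterior : ∀ u ∈ interior (Ico (0 : ℝ) 1), u ∈ Ico (0 : ℝ) 1 := by
    rw [interior_Ico]; exact fun u hu => Ioo_subset_Ico_self hu
  have hconv : StrictConvexOn ℝ (Ico 0 1) L :=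
    strictConvexOn_of_deriv2_pos (convex_Ico 0 1) hcont fun u hu => hL2 u (hinterior u hu)
  have hLnonneg : ∀ ω ∈ Ico (0 : ℝ) 1, 0 ≤ L ω := fun ω hω => hL0 ▸
    (strictMonoOn_of_deriv_pos (convex_Ico 0 1) hcont fun u hu => hL1 u (hinterior u hu)).monotoneOn
      ⟨le_rfl, one_pos⟩ hω hω.1
  have hrmu : 0 < r - mu := sub_pos.2 hr
  have hthxs : 0 ≤ th * xs := mul_nonneg hth.1 hxs.le
  have hx2pos : 0 < x2 := hx2def ▸ add_pos_of_nonneg_of_pos hthxs (div_pos two_pos hrmu)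
  have hx2r : 1 ≤ (r - mu) * x2 := by
    have : (r - mu) * x2 = (r - mu) * (th * xs) + 2 := by rw [hx2def]; field_simp
    nlinarith [mul_nonneg hrmu.le hthxs]
  intro x hx
  exact ⟨fun ξ _ => hamiltonian_ineq_p₂ hcont hL0 hLtop hconv hx2r hx2pos hx.1 ξ,
    fun q hq => hamiltonian_ineq_V₂ hLnonneg hmu hlam hB hx2r hx2pos hx.1 hq.1 hq.2⟩

theorem stmt_17
    (r mu lam sig : ℝ) (hmu : 0 ≤ mu) (hr : mu < r) (hlam : 0 ≤ lam) (hsig : 0 ≤ sig)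
    (L : ℝ → ℝ)
    (hL : ContDiffOn ℝ 2 L (Set.Ico 0 1))
    (hL0 : L 0 = 0)
    (hL1 : ∀ u ∈ Set.Ico (0:ℝ) 1, 0 < deriv L u)
    (hL2 : ∀ u ∈ Set.Ico (0:ℝ) 1, 0 < deriv (deriv L) u)
    (hLtop : Filter.Tendsto L (nhdsWithin 1 (Set.Iio 1)) Filter.atTop)
    (xs B th : ℝ) (hxs : 0 < xs) (hB : 0 < B) (hth : th ∈ Set.Ico (0:ℝ) 1)
    (x2 : ℝ) (hx2def : x2 = th * xs + 2 / (r - mu)) (hx2 : x2 < xs) :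
    ∀ x ∈ Set.Ioo x2 xs,
      (∀ ξ : ℝ, 0 ≤ ξ →
        (r + lam) * (1 - x2 / x) + Hxi L lam r mu sig x ξ (x2 / x) * deriv (fun y => x2 / y) x +
          sig ^ 2 * x ^ 2 / 2 * deriv (deriv (fun y => x2 / y)) x ≤ 0) ∧
      (∀ q ∈ Set.Ioc (0:ℝ) (x2 / x),
        0 ≤ -r * ((1 - x2 / x) * B) +
          Ham L lam r mu sig x (deriv (fun y => (1 - x2 / y) * B) x) q +
          sig ^ 2 * x ^ 2 / 2 * deriv (deriv (fun y => (1 - x2 / y) * B)) x) :=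
  stmt_17_general r mu lam sig hmu hr hlam L hL hL0 hL1 hL2 hLtop xs B th hxs hB hth x2 hx2def
end

section
/- Let r > μ ≥ 0, λ ≥ 0, α ≥ 1, R₀ > 0 and x* > 0, and set θ₁ = R₀/(x*)^α and θ₂ = R₀/(2x*)^α; assume θ₁ ≤ 1 (hence θ₂ < 1). Suppose q ∈ (θ₂, 1) satisfies the implicit relation q = 2·θ₂·( (1 − q)/(1 − θ₂) )^{(r−μ)/(r+λ)}. Then q < 2·θ₂ = 2^{1−α}·θ₁ ≤ θ₁. (Interpretation: if bankruptcy is postponed from threshold x* to threshold 2x*, the discounted bond price at debt level x* falls strictly below the salvage rate θ(x*); hence announcing a larger bankruptcy threshold is never time consistent.) -/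
open Set Filter

theorem stmt_19
    (r mu lam : ℝ) (hmu : 0 ≤ mu) (hr : mu < r) (hlam : 0 ≤ lam)
    (α R0 xs : ℝ) (hα : 1 ≤ α) (hR0 : 0 < R0) (hxs : 0 < xs)
    (th1 th2 : ℝ) (hth1 : th1 = R0 / xs ^ α) (hth2 : th2 = R0 / (2 * xs) ^ α)
    (hth1le : th1 ≤ 1)
    (q : ℝ) (hq : q ∈ Set.Ioo th2 1)
    (hrel : q = 2 * th2 * ((1 - q) / (1 - th2)) ^ ((r - mu) / (r + lam))) :
    q < 2 * th2 ∧ 2 * th2 = 2 ^ ((1:ℝ) - α) * th1 ∧ 2 ^ ((1:ℝ) - α) * th1 ≤ th1 := by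
  obtain ⟨hq1, hq2⟩ := hq
  have hxsα : (0:ℝ) < xs ^ α := Real.rpow_pos_of_pos hxs α
  have h2xsα : (0:ℝ) < (2 * xs) ^ α := Real.rpow_pos_of_pos (by linarith) α
  have hth2pos : 0 < th2 := by rw [hth2]; positivity
  have hth2lt1 : th2 < 1 := lt_trans hq1 hq2
  have he : 0 < (r - mu) / (r + lam) := by
    apply div_pos <;> linarith
  have hratio0 : 0 ≤ (1 - q) / (1 - th2) := by
    apply div_nonneg <;> linarith
  have hratio1 : (1 - q) / (1 - th2) < 1 := by
    rw [div_lt_one (by linarith)]; linarith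
  have hpow : ((1 - q) / (1 - th2)) ^ ((r - mu) / (r + lam)) < 1 :=
    Real.rpow_lt_one hratio0 hratio1 he
  refine ⟨?_, ?_, ?_⟩
  · calc q = 2 * th2 * ((1 - q) / (1 - th2)) ^ ((r - mu) / (r + lam)) := hrel
      _ < 2 * th2 * 1 := by
          apply mul_lt_mul_of_pos_left hpow (by linarith)
      _ = 2 * th2 := mul_one _
  · have hsplit : (2 * xs) ^ α = 2 ^ α * xs ^ α :=
      Real.mul_rpow (by norm_num) hxs.le
    have h2α : (0:ℝ) < 2 ^ α := Real.rpow_pos_of_pos (by norm_num) α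
    rw [hth1, hth2, hsplit, Real.rpow_sub (by norm_num), Real.rpow_one]
    field_simp
  · have hle1 : (2:ℝ) ^ ((1:ℝ) - α) ≤ 1 :=
      Real.rpow_le_one_of_one_le_of_nonpos (by norm_num) (by linarith)
    have hth1pos : 0 ≤ th1 := by rw [hth1]; positivity
    nlinarith
end
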